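/- arXiv:1208.5217 — 7 statements merged into one kernel-verified Lean document; each statement's English description precedes it below -/
import Mathlib

section
/- Let d ≥ 1 and let A ⊆ ℝ^d × ℝ^d be a monotone relation, i.e. ⟨x − y, x* − y*⟩ ≥ 0 for all (x,x*), (y,y*) ∈ A, and suppose its domain dom A = {x ∈ ℝ^d : ∃ x*, (x,x*) ∈ A} has nonempty interior. Let C be a bounded closed subset of the interior of dom A. Then there exists M > 0 such that ‖a*‖ ≤ M for every (a,a*) ∈ A with a ∈ C. -/
open Bornology Set Metric

section aux

variable {E : Type*} [NormedAddCommGroup E] [InnerProductSpace ℝ E] [FiniteDimensional ℝ E]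

/-- Local boundedness of a monotone operator near an interior point of its domain. -/
lemma monotone_loc_bound (A : Set (E × E))
    (hmono : ∀ p ∈ A, ∀ q ∈ A, (0 : ℝ) ≤ inner ℝ (p.1 - q.1) (p.2 - q.2))
    (x0 : E) (hx0 : x0 ∈ interior {x : E | ∃ y, (x, y) ∈ A}) :
    ∃ r > 0, ∃ K : ℝ, ∀ p ∈ A, ‖p.1 - x0‖ ≤ r → ‖p.2‖ ≤ K := by
  set D := {x : E | ∃ y, (x, y) ∈ A} with hD
  obtain ⟨ρ, hρ0, hρ⟩ : ∃ ρ > 0, closedBall x0 ρ ⊆ D := by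
    obtain ⟨ρ, hρ0, h⟩ := (Metric.nhds_basis_closedBall.mem_iff).1
      (isOpen_interior.mem_nhds hx0)
    exact ⟨ρ, hρ0, h.trans interior_subset⟩
  set S := {p : E × E | p ∈ A ∧ p.1 ∈ closedBall x0 ρ} with hS
  set g : E → (E × E) → ℝ := fun x p => inner ℝ (x - p.1) p.2 with hg
  set h : E → ℝ := fun x => sSup ((g x) '' S) with hh
  -- S is nonempty
  obtain ⟨y0, hy0⟩ : x0 ∈ D := hρ (mem_closedBall_self hρ0.le)
  have hSne : S.Nonempty := ⟨(x0, y0), hy0, mem_closedBall_self hρ0.le⟩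
  have hSneIm : ∀ x : E, ((g x) '' S).Nonempty := fun x => hSne.image _
  -- boundedness above of the sup sets
  have hBdd : ∀ x ∈ closedBall x0 ρ, BddAbove ((g x) '' S) := by
    intro x hx
    obtain ⟨xs, hxs⟩ : x ∈ D := hρ hx
    refine ⟨2 * ρ * ‖xs‖, ?_⟩
    rintro v ⟨p, hp, rfl⟩
    have hmon := hmono (x, xs) hxs p hp.1
    simp only [hg]
    have h1 : (inner ℝ (x - p.1) p.2 : ℝ) ≤ inner ℝ (x - p.1) xs := by
      have : (0:ℝ) ≤ inner ℝ (x - p.1) (xs - p.2) := hmon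
      rw [inner_sub_right] at this; linarith
    have h2 : (inner ℝ (x - p.1) xs : ℝ) ≤ ‖x - p.1‖ * ‖xs‖ := real_inner_le_norm _ _
    have h3 : ‖x - p.1‖ ≤ 2 * ρ := by
      have := mem_closedBall_iff_norm.1 hx
      have := mem_closedBall_iff_norm.1 hp.2
      calc ‖x - p.1‖ = ‖(x - x0) + (x0 - p.1)‖ := by rw [sub_add_sub_cancel]
        _ ≤ ‖x - x0‖ + ‖x0 - p.1‖ := norm_add_le _ _
        _ ≤ ρ + ρ := by
            refine add_le_add ‹‖x - x0‖ ≤ ρ› ?_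
            rw [norm_sub_rev]; exact ‹‖p.1 - x0‖ ≤ ρ›
        _ = 2 * ρ := by ring
    calc (inner ℝ (x - p.1) p.2 : ℝ) ≤ ‖x - p.1‖ * ‖xs‖ := h1.trans h2
      _ ≤ 2 * ρ * ‖xs‖ := by
          exact mul_le_mul_of_nonneg_right h3 (norm_nonneg _)
  -- each element is ≤ h x
  have hle : ∀ x ∈ closedBall x0 ρ, ∀ p ∈ S, g x p ≤ h x := by
    intro x hx p hp
    exact le_csSup (hBdd x hx) (mem_image_of_mem _ hp)
  -- convexity of h on the open ball
  have hconv : ConvexOn ℝ (ball x0 ρ) h := by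
    refine ⟨convex_ball _ _, ?_⟩
    intro x hx z hz a b ha hb hab
    refine csSup_le (hSneIm _) ?_
    rintro v ⟨p, hp, rfl⟩
    have hkey : g (a • x + b • z) p = a * g x p + b * g z p := by
      simp only [hg]
      have : a • x + b • z - p.1 = a • (x - p.1) + b • (z - p.1) := by
        rw [smul_sub, smul_sub]
        rw [show a • x + b • z - p.1 = a • x + b • z - (a + b) • p.1 by rw [hab, one_smul]]
        module
      rw [this, inner_add_left, real_inner_smul_left, real_inner_smul_left]
    rw [hkey]
    have hxcb : x ∈ closedBall x0 ρ := ball_subset_closedBall hx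
    have hzcb : z ∈ closedBall x0 ρ := ball_subset_closedBall hz
    exact add_le_add (mul_le_mul_of_nonneg_left (hle x hxcb p hp) ha)
      (mul_le_mul_of_nonneg_left (hle z hzcb p hp) hb)
  -- continuity, hence boundedness on the middle closed ball
  have hcont : ContinuousOn h (ball x0 ρ) := hconv.continuousOn isOpen_ball
  have hsub : closedBall x0 (ρ/2) ⊆ ball x0 ρ := closedBall_subset_ball (by linarith)
  obtain ⟨K, hK⟩ := (isCompact_closedBall x0 (ρ/2)).exists_bound_of_continuousOn
    (hcont.mono hsub)
  refine ⟨ρ/4, by linarith, 4 * max K 0 / ρ, ?_⟩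
  rintro ⟨a, as⟩ hpA hnear
  simp only at hnear ⊢
  rcases eq_or_ne as 0 with rfl | has
  · simp; positivity
  · set u := ‖as‖⁻¹ • as with hu
    set x := a + (ρ/4) • u with hx
    have hacb : a ∈ closedBall x0 ρ := by
      rw [mem_closedBall_iff_norm]; linarith
    have hpS : (a, as) ∈ S := ⟨hpA, hacb⟩
    have hux : ‖u‖ = 1 := by rw [hu, norm_smul]; simp [norm_inv, has]
    have hxcb2 : x ∈ closedBall x0 (ρ/2) := by
      rw [mem_closedBall_iff_norm, hx]
      calc ‖a + (ρ/4) • u - x0‖ = ‖(a - x0) + (ρ/4) • u‖ := by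
            congr 1; abel
        _ ≤ ‖a - x0‖ + ‖(ρ/4) • u‖ := norm_add_le _ _
        _ ≤ ρ/4 + ρ/4 := by
            refine add_le_add hnear ?_
            rw [norm_smul, hux, mul_one, Real.norm_eq_abs, abs_of_nonneg (by linarith : (0:ℝ) ≤ ρ/4)]
        _ = ρ/2 := by ring
    have hxcb : x ∈ closedBall x0 ρ := (hsub.trans ball_subset_closedBall) hxcb2
    have hval : g x (a, as) = (ρ/4) * ‖as‖ := by
      simp only [hg, hx]
      rw [show a + (ρ/4) • u - a = (ρ/4) • u by abel]
      rw [real_inner_smul_left, hu, real_inner_smul_left, real_inner_self_eq_norm_sq,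
        sq, inv_mul_cancel_left₀ (norm_ne_zero_iff.2 has)]
    have h1 : (ρ/4) * ‖as‖ ≤ h x := hval ▸ hle x hxcb (a, as) hpS
    have h2 : h x ≤ max K 0 := by
      have := hK x hxcb2
      calc h x ≤ ‖h x‖ := le_abs_self _
        _ ≤ K := this
        _ ≤ max K 0 := le_max_left _ _
    rw [le_div_iff₀ hρ0]
    nlinarith [h1.trans h2]

end aux

/-- **Local boundedness of monotone operators on compact subsets of the interior of the
domain.** If `A ⊆ ℝ^d × ℝ^d` is a monotone relation whose domain has nonempty interior and
`C` is a bounded closed subset of the interior of the domain, then the values of `A` over `C`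
are uniformly bounded. -/
theorem stmt_1 (d : ℕ) (hd : 1 ≤ d)
    (A : Set (EuclideanSpace ℝ (Fin d) × EuclideanSpace ℝ (Fin d)))
    (hmono : ∀ p ∈ A, ∀ q ∈ A, (0 : ℝ) ≤ inner ℝ (p.1 - q.1) (p.2 - q.2))
    (hint : (interior {x : EuclideanSpace ℝ (Fin d) | ∃ y, (x, y) ∈ A}).Nonempty)
    (C : Set (EuclideanSpace ℝ (Fin d)))
    (hCb : IsBounded C) (hCc : IsClosed C)
    (hCsub : C ⊆ interior {x : EuclideanSpace ℝ (Fin d) | ∃ y, (x, y) ∈ A}) :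
    ∃ M : ℝ, 0 < M ∧ ∀ p ∈ A, p.1 ∈ C → ‖p.2‖ ≤ M := by
  have hCcomp : IsCompact C := Metric.isCompact_of_isClosed_isBounded hCc hCb
  have H : ∀ x : EuclideanSpace ℝ (Fin d), ∃ r, 0 < r ∧ ∃ K : ℝ,
      x ∈ C → ∀ p ∈ A, ‖p.1 - x‖ ≤ r → ‖p.2‖ ≤ K := by
    intro x
    by_cases hx : x ∈ C
    · obtain ⟨r, hr, K, hK⟩ := monotone_loc_bound A hmono x (hCsub hx)
      exact ⟨r, hr, K, fun _ => hK⟩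
    · exact ⟨1, one_pos, 0, fun h => absurd h hx⟩
  choose r hr K hK using H
  obtain ⟨t, htC, htcov⟩ := hCcomp.elim_nhds_subcover (fun x => ball x (r x))
    (fun x _ => ball_mem_nhds x (hr x))
  refine ⟨1 + ∑ x ∈ t, max (K x) 0, by positivity, ?_⟩
  intro p hpA hpC
  obtain ⟨x, hxt, hpx⟩ := mem_iUnion₂.1 (htcov hpC)
  have h1 : ‖p.2‖ ≤ K x := hK x (htC x hxt) p hpA (mem_ball_iff_norm.1 hpx).le
  have h2 : max (K x) 0 ≤ ∑ y ∈ t, max (K y) 0 :=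
    Finset.single_le_sum (f := fun y => max (K y) 0) (fun y _ => le_max_right _ _) hxt
  calc ‖p.2‖ ≤ max (K x) 0 := h1.trans (le_max_left _ _)
    _ ≤ ∑ y ∈ t, max (K y) 0 := h2
    _ ≤ 1 + ∑ y ∈ t, max (K y) 0 := by linarith
end

section
/- Let φ : E → ℝ ∪ {+∞} be proper, lower semicontinuous and convex. Then I_φ is strictly convex on its domain — i.e. I_φ(λx + (1−λ)y) < λI_φ(x) + (1−λ)I_φ(y) whenever x, y ∈ dom I_φ, x ≠ y (as elements of L¹_E(S,μ)) and 0 < λ < 1 — if and only if φ is strictly convex on its domain, i.e. φ(λu + (1−λ)v) < λφ(u) + (1−λ)φ(v) whenever u, v ∈ dom φ, u ≠ v and 0 < λ < 1. -/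
open MeasureTheory Filter Topology Set

open Classical in
/-- The integral functional `I_φ(x) = ∫_S φ(x(s)) dμ(s)` with values in `ℝ ∪ {+∞}`
(modelled inside `EReal`; it never takes the value `-∞`): it is real (the Bochner
integral of `s ↦ φ(x(s))`) when `φ ∘ x` is a.e. finite and integrable, and `+∞`
otherwise. -/
noncomputable def Iphi {S E : Type*} [MeasurableSpace S] (μ : Measure S)
    (φ : E → EReal) (x : S → E) : EReal :=
  if (Integrable (fun s => (φ (x s)).toReal) μ ∧ ∀ᵐ s ∂μ, φ (x s) ≠ ⊤)
  then ((∫ s, (φ (x s)).toReal ∂μ : ℝ) : EReal)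
  else ⊤

lemma Iphi_cond {S E : Type*} [MeasurableSpace S] {μ : Measure S}
    {φ : E → EReal} {x : S → E} (h : Iphi μ φ x ≠ ⊤) :
    Integrable (fun s => (φ (x s)).toReal) μ ∧ ∀ᵐ s ∂μ, φ (x s) ≠ ⊤ := by
  by_contra hc
  rw [Iphi, if_neg hc] at h
  exact h rfl

lemma Iphi_eq {S E : Type*} [MeasurableSpace S] {μ : Measure S}
    {φ : E → EReal} {x : S → E}
    (h : Integrable (fun s => (φ (x s)).toReal) μ ∧ ∀ᵐ s ∂μ, φ (x s) ≠ ⊤) :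
    Iphi μ φ x = ((∫ s, (φ (x s)).toReal ∂μ : ℝ) : EReal) := by
  rw [Iphi, if_pos h]

-- strict integral inequality
lemma integral_lt_of_ae_le_of_ne {S : Type*} [MeasurableSpace S] {μ : Measure S}
    {f g : S → ℝ} (hf : Integrable f μ) (hg : Integrable g μ)
    (hle : f ≤ᵐ[μ] g) (hne : ¬ f =ᵐ[μ] g) : ∫ s, f s ∂μ < ∫ s, g s ∂μ := by
  have hsub : Integrable (fun s => g s - f s) μ := hg.sub hf
  have hpos : 0 < ∫ s, (g s - f s) ∂μ := by
    rw [integral_pos_iff_support_of_nonneg_ae (hle.mono fun s h => by simpa using h) hsub]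
    rw [pos_iff_ne_zero]
    intro h0
    apply hne
    have : ∀ᵐ s ∂μ, g s - f s = 0 := by
      rw [ae_iff]
      simpa [Function.support] using h0
    filter_upwards [this] with s hs
    linarith [hs]
  rw [integral_sub hg hf] at hpos
  linarith

lemma affine_minorant {E : Type*} [NormedAddCommGroup E] [NormedSpace ℝ E]
    (φ : E → EReal)
    (hbot : ∀ v, φ v ≠ ⊥) (hne : ∃ v, φ v ≠ ⊤)
    (hlsc : LowerSemicontinuous φ)
    (hconv : ∀ u v : E, ∀ t : ℝ, 0 ≤ t → t ≤ 1 →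
      φ (t • u + (1 - t) • v) ≤ (t : EReal) * φ u + ((1 - t : ℝ) : EReal) * φ v) :
    ∃ (g : E →L[ℝ] ℝ) (c : ℝ), ∀ v, ((g v + c : ℝ) : EReal) ≤ φ v := by
  set C : Set (E × ℝ) := {p | φ p.1 ≤ (p.2 : EReal)} with hC
  -- convexity of the epigraph
  have hCconv : Convex ℝ C := by
    rintro p hp q hq a b ha hb hab
    simp only [hC, mem_setOf_eq] at hp hq ⊢
    have hb' : b = 1 - a := by linarith
    have hpt : φ p.1 ≠ ⊤ := ne_top_of_le_ne_top (EReal.coe_ne_top _) hp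
    have hqt : φ q.1 ≠ ⊤ := ne_top_of_le_ne_top (EReal.coe_ne_top _) hq
    have hp1 : φ p.1 = ((φ p.1).toReal : EReal) := (EReal.coe_toReal hpt (hbot _)).symm
    have hq1 : φ q.1 = ((φ q.1).toReal : EReal) := (EReal.coe_toReal hqt (hbot _)).symm
    have hple : (φ p.1).toReal ≤ p.2 := by
      have := EReal.toReal_le_toReal hp (hbot _) (EReal.coe_ne_top _)
      simpa using this
    have hqle : (φ q.1).toReal ≤ q.2 := by
      have := EReal.toReal_le_toReal hq (hbot _) (EReal.coe_ne_top _)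
      simpa using this
    have key := hconv p.1 q.1 a ha (by linarith)
    have h1 : (a • p + b • q).1 = a • p.1 + (1 - a) • q.1 := by
      simp [hb']
    have h2 : ((a • p + b • q).2 : ℝ) = a * p.2 + (1 - a) * q.2 := by
      simp [hb', smul_eq_mul]
    rw [h1, h2]
    calc φ (a • p.1 + (1 - a) • q.1)
        ≤ (a : EReal) * φ p.1 + ((1 - a : ℝ) : EReal) * φ q.1 := key
      _ = ((a * (φ p.1).toReal + (1 - a) * (φ q.1).toReal : ℝ) : EReal) := by
          rw [hp1, hq1, ← EReal.coe_mul, ← EReal.coe_mul, ← EReal.coe_add]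
          simp
      _ ≤ ((a * p.2 + (1 - a) * q.2 : ℝ) : EReal) := by
          apply EReal.coe_le_coe_iff.2
          have := mul_le_mul_of_nonneg_left hple ha
          have := mul_le_mul_of_nonneg_left hqle (by linarith : (0:ℝ) ≤ 1 - a)
          linarith
  -- closedness of the epigraph
  have hCclosed : IsClosed C := by
    rw [← isOpen_compl_iff, isOpen_iff_mem_nhds]
    rintro ⟨v, r⟩ hvr
    simp only [mem_compl_iff, hC, mem_setOf_eq, not_le] at hvr
    obtain ⟨m, hm1, hm2⟩ := EReal.exists_between_coe_real hvr
    have hU : ∀ᶠ w in 𝓝 v, (m : EReal) < φ w := hlsc v (m : EReal) hm2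
    have : (({w | (m : EReal) < φ w} : Set E) ×ˢ (Iio m)) ∈ 𝓝 ((v, r) : E × ℝ) :=
      prod_mem_nhds hU (Iio_mem_nhds (by exact_mod_cast hm1))
    filter_upwards [this] with p hp
    simp only [mem_prod, mem_setOf_eq, mem_Iio] at hp
    simp only [mem_compl_iff, hC, mem_setOf_eq, not_le]
    exact lt_trans (by exact_mod_cast hp.2) hp.1
  -- a point strictly below the epigraph
  obtain ⟨v0, hv0⟩ := hne
  set T : ℝ := (φ v0).toReal with hT
  have hv0eq : φ v0 = (T : EReal) := (EReal.coe_toReal hv0 (hbot _)).symm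
  have hz0 : ((v0, T - 1) : E × ℝ) ∉ C := by
    simp only [hC, mem_setOf_eq, not_le, hv0eq]
    exact_mod_cast sub_one_lt T
  obtain ⟨f, u, hfu, huf⟩ := geometric_hahn_banach_closed_point hCconv hCclosed hz0
  set c : ℝ := f (0, 1) with hc
  have hdecomp : ∀ v : E, ∀ r : ℝ, f (v, r) = f (v, 0) + r * c := by
    intro v r
    have h : ((v, r) : E × ℝ) = (v, 0) + r • ((0 : E), (1 : ℝ)) := by
      simp [Prod.ext_iff]
    rw [h, map_add, f.map_smul, smul_eq_mul]
  have hmemC : ∀ R : ℝ, T ≤ R → ((v0, R) : E × ℝ) ∈ C := by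
    intro R hR
    simp only [hC, mem_setOf_eq, hv0eq]
    exact_mod_cast hR
  have hcneg : c < 0 := by
    rcases lt_trichotomy c 0 with h | h | h
    · exact h
    · exfalso
      have h1 := hfu _ (hmemC T le_rfl)
      rw [hdecomp, h, mul_zero, add_zero] at h1
      rw [hdecomp, h, mul_zero, add_zero] at huf
      linarith
    · exfalso
      set R := max T ((u - f (v0, 0)) / c) with hR
      have h1 := hfu _ (hmemC R (le_max_left _ _))
      rw [hdecomp] at h1
      have h2 : (u - f (v0, 0)) / c ≤ R := le_max_right _ _
      have h3 : u - f (v0, 0) ≤ R * c := by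
        rw [div_le_iff₀ h] at h2; linarith
      linarith
  refine ⟨(-(1/c)) • (f.comp (ContinuousLinearMap.inl ℝ E ℝ)), u / c, ?_⟩
  intro v
  by_cases hvt : φ v = ⊤
  · rw [hvt]; exact le_top
  have hveq : φ v = (((φ v).toReal : ℝ) : EReal) := (EReal.coe_toReal hvt (hbot _)).symm
  have hmem : ((v, (φ v).toReal) : E × ℝ) ∈ C := by
    rw [hC, mem_setOf_eq]
    exact le_of_eq hveq
  have h1 := hfu _ hmem
  rw [hdecomp] at h1
  rw [hveq]
  apply EReal.coe_le_coe_iff.2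
  have h2 : (u - f (v, 0)) / c ≤ (φ v).toReal := by
    rw [div_le_iff_of_neg hcneg]
    linarith
  calc (((-(1/c)) • (f.comp (ContinuousLinearMap.inl ℝ E ℝ))) v + u / c : ℝ)
      = -(1/c) * f (v, 0) + u / c := by
        simp [ContinuousLinearMap.smul_apply, ContinuousLinearMap.comp_apply]
    _ = (u - f (v, 0)) / c := by ring
    _ ≤ (φ v).toReal := h2

/-- **Strict convexity of `I_φ` on its domain is equivalent to strict convexity of `φ` on its
domain.** Here `φ : ℝ^d → ℝ ∪ {+∞}` is proper, lower semicontinuous and convex, and `(S,μ)` is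
a complete finite nonzero measure space. -/
theorem stmt_2 {S : Type*} [MeasurableSpace S] (μ : Measure S)
    [IsFiniteMeasure μ] [μ.IsComplete] (hμ : μ ≠ 0) (d : ℕ) (hd : 1 ≤ d)
    (φ : EuclideanSpace ℝ (Fin d) → EReal)
    (hproper : (∀ v, φ v ≠ ⊥) ∧ (∃ v, φ v ≠ ⊤))
    (hlsc : LowerSemicontinuous φ)
    (hconv : ∀ u v : EuclideanSpace ℝ (Fin d), ∀ t : ℝ, 0 ≤ t → t ≤ 1 →
      φ (t • u + (1 - t) • v) ≤ (t : EReal) * φ u + ((1 - t : ℝ) : EReal) * φ v) :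
    (∀ x y : S → EuclideanSpace ℝ (Fin d), Integrable x μ → Integrable y μ →
        Iphi μ φ x ≠ ⊤ → Iphi μ φ y ≠ ⊤ → ¬ (x =ᵐ[μ] y) →
        ∀ t : ℝ, 0 < t → t < 1 →
          Iphi μ φ (fun s => t • x s + (1 - t) • y s) <
            (t : EReal) * Iphi μ φ x + ((1 - t : ℝ) : EReal) * Iphi μ φ y)
      ↔
    (∀ u v : EuclideanSpace ℝ (Fin d), φ u ≠ ⊤ → φ v ≠ ⊤ → u ≠ v →
        ∀ t : ℝ, 0 < t → t < 1 →
          φ (t • u + (1 - t) • v) < (t : EReal) * φ u + ((1 - t : ℝ) : EReal) * φ v) := by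
  obtain ⟨hbot, hne⟩ := hproper
  have hφm : Measurable φ := hlsc.measurable
  haveI haeNeBot : (ae μ).NeBot := ae_neBot.mpr hμ
  constructor
  · -- I strict ⇒ φ strict
    intro H u v hu hv huv t ht0 ht1
    set m : ℝ := (μ Set.univ).toReal with hm
    have hμu : μ Set.univ ≠ 0 := by
      simpa [Measure.measure_univ_eq_zero] using hμ
    have hmpos : 0 < m := ENNReal.toReal_pos hμu (measure_ne_top μ _)
    have hcond : ∀ w : EuclideanSpace ℝ (Fin d), φ w ≠ ⊤ →
        (Integrable (fun _ : S => (φ w).toReal) μ ∧ ∀ᵐ _s ∂μ, φ w ≠ ⊤) :=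
      fun w hw => ⟨integrable_const _, Eventually.of_forall fun _ => hw⟩
    have hIconst : ∀ w : EuclideanSpace ℝ (Fin d), φ w ≠ ⊤ →
        Iphi μ φ (fun _ => w) = ((m * (φ w).toReal : ℝ) : EReal) := by
      intro w hw
      rw [Iphi_eq (hcond w hw), integral_const]
      simp [smul_eq_mul, hm, Measure.real]
    have hxy : ¬ ((fun _ : S => u) =ᵐ[μ] fun _ : S => v) := by
      intro h
      obtain ⟨s, hs⟩ := h.exists
      exact huv hs
    have key := H (fun _ => u) (fun _ => v) (integrable_const _) (integrable_const _)
      (by rw [hIconst u hu]; exact EReal.coe_ne_top _)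
      (by rw [hIconst v hv]; exact EReal.coe_ne_top _) hxy t ht0 ht1
    set w : EuclideanSpace ℝ (Fin d) := t • u + (1 - t) • v with hw
    have hconst : (fun s : S => t • (fun _ : S => u) s + (1 - t) • (fun _ : S => v) s)
        = fun _ : S => w := rfl
    rw [hconst, hIconst u hu, hIconst v hv] at key
    have hRHS : (t : EReal) * ((m * (φ u).toReal : ℝ) : EReal)
        + ((1 - t : ℝ) : EReal) * ((m * (φ v).toReal : ℝ) : EReal)
        = ((t * (m * (φ u).toReal) + (1 - t) * (m * (φ v).toReal) : ℝ) : EReal) := by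
      rw [← EReal.coe_mul, ← EReal.coe_mul, ← EReal.coe_add]
    rw [hRHS] at key
    have hwt : φ w ≠ ⊤ := by
      by_contra hwt
      have : Iphi μ φ (fun _ : S => w) = ⊤ := by
        rw [Iphi]
        apply if_neg
        rintro ⟨-, hae⟩
        obtain ⟨s, hs⟩ := hae.exists
        exact hs hwt
      rw [this] at key
      exact (not_top_lt) key
    rw [hIconst w hwt] at key
    have hreal : m * (φ w).toReal < t * (m * (φ u).toReal) + (1 - t) * (m * (φ v).toReal) :=
      EReal.coe_lt_coe_iff.1 key
    have hfin : (φ w).toReal < t * (φ u).toReal + (1 - t) * (φ v).toReal := by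
      rw [← mul_lt_mul_iff_right₀ hmpos]
      ring_nf
      ring_nf at hreal
      linarith
    have hu1 : φ u = ((φ u).toReal : EReal) := (EReal.coe_toReal hu (hbot _)).symm
    have hv1 : φ v = ((φ v).toReal : EReal) := (EReal.coe_toReal hv (hbot _)).symm
    have hw1 : φ w = ((φ w).toReal : EReal) := (EReal.coe_toReal hwt (hbot _)).symm
    rw [← hw] at *
    rw [hw1, hu1, hv1, ← EReal.coe_mul, ← EReal.coe_mul, ← EReal.coe_add]
    exact_mod_cast hfin
  · -- φ strict ⇒ I strict
    intro H x y hx hy hIx hIy hxy t ht0 ht1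
    obtain ⟨hfx, hax⟩ := Iphi_cond hIx
    obtain ⟨hfy, hay⟩ := Iphi_cond hIy
    obtain ⟨g, c, hg⟩ := affine_minorant φ hbot hne hlsc hconv
    set z : S → EuclideanSpace ℝ (Fin d) := fun s => t • x s + (1 - t) • y s with hzdef
    have hz : Integrable z μ := (hx.smul t).add (hy.smul (1 - t))
    set fx : S → ℝ := fun s => (φ (x s)).toReal with hfxdef
    set fy : S → ℝ := fun s => (φ (y s)).toReal with hfydef
    set h : S → ℝ := fun s => (φ (z s)).toReal with hhdef
    set G : S → ℝ := fun s => t * fx s + (1 - t) * fy s with hGdef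
    set l : S → ℝ := fun s => g (z s) + c with hldef
    -- a.e. properties
    have hae : ∀ᵐ s ∂μ, φ (z s) ≠ ⊤ ∧ h s ≤ G s ∧ l s ≤ h s := by
      filter_upwards [hax, hay] with s hsx hsy
      have hx1 : φ (x s) = ((fx s : ℝ) : EReal) := (EReal.coe_toReal hsx (hbot _)).symm
      have hy1 : φ (y s) = ((fy s : ℝ) : EReal) := (EReal.coe_toReal hsy (hbot _)).symm
      have hcomb : φ (z s) ≤ ((G s : ℝ) : EReal) := by
        calc φ (z s) ≤ (t : EReal) * φ (x s) + ((1 - t : ℝ) : EReal) * φ (y s) :=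
              hconv (x s) (y s) t ht0.le ht1.le
          _ = ((G s : ℝ) : EReal) := by
              rw [hx1, hy1, ← EReal.coe_mul, ← EReal.coe_mul, ← EReal.coe_add]
      have hzt : φ (z s) ≠ ⊤ := ne_top_of_le_ne_top (EReal.coe_ne_top _) hcomb
      have hz1 : φ (z s) = ((h s : ℝ) : EReal) := (EReal.coe_toReal hzt (hbot _)).symm
      refine ⟨hzt, ?_, ?_⟩
      · have := EReal.toReal_le_toReal hcomb (hbot _) (EReal.coe_ne_top _)
        simpa [hhdef] using this
      · have := hg (z s)
        rw [hz1] at this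
        exact_mod_cast this
    -- integrability
    have hG : Integrable G μ := (hfx.const_mul t).add (hfy.const_mul (1 - t))
    have hl : Integrable l μ := (g.integrable_comp hz).add (integrable_const c)
    have hhm : AEStronglyMeasurable h μ := by
      have hzm : AEMeasurable z μ := hz.aemeasurable
      exact ((hφm.comp_aemeasurable hzm).ereal_toReal).aestronglyMeasurable
    have hh : Integrable h μ := by
      apply Integrable.mono' (hl.abs.add hG.abs) hhm
      filter_upwards [hae] with s hs
      have h1 := hs.2.1
      have h2 := hs.2.2
      have := abs_nonneg (l s)
      have := abs_nonneg (G s)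
      have := le_abs_self (G s)
      have := neg_abs_le (l s)
      rw [Real.norm_eq_abs, abs_le]
      simp only [Pi.add_apply]
      constructor <;> linarith
    have hcondz : Integrable (fun s => (φ (z s)).toReal) μ ∧ ∀ᵐ s ∂μ, φ (z s) ≠ ⊤ :=
      ⟨hh, hae.mono fun s hs => hs.1⟩
    -- strictness
    have hneq : ¬ h =ᵐ[μ] G := by
      intro heq
      apply hxy
      filter_upwards [hax, hay, hae, heq] with s hsx hsy hs hseq
      by_contra hne'
      have hstrict := H (x s) (y s) hsx hsy hne' t ht0 ht1
      have hx1 : φ (x s) = ((fx s : ℝ) : EReal) := (EReal.coe_toReal hsx (hbot _)).symm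
      have hy1 : φ (y s) = ((fy s : ℝ) : EReal) := (EReal.coe_toReal hsy (hbot _)).symm
      have hz1 : φ (z s) = ((h s : ℝ) : EReal) := (EReal.coe_toReal hs.1 (hbot _)).symm
      rw [hx1, hy1, hz1, ← EReal.coe_mul, ← EReal.coe_mul, ← EReal.coe_add] at hstrict
      have : h s < G s := by exact_mod_cast hstrict
      rw [hseq] at this
      exact lt_irrefl _ this
    have hint : ∫ s, h s ∂μ < ∫ s, G s ∂μ :=
      integral_lt_of_ae_le_of_ne hh hG (hae.mono fun s hs => hs.2.1) hneq
    have hGint : ∫ s, G s ∂μ = t * ∫ s, fx s ∂μ + (1 - t) * ∫ s, fy s ∂μ := by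
      rw [hGdef]
      rw [integral_add (hfx.const_mul t) (hfy.const_mul (1 - t)),
        integral_const_mul, integral_const_mul]
    rw [Iphi_eq ⟨hfx, hax⟩, Iphi_eq ⟨hfy, hay⟩, Iphi_eq hcondz,
      ← EReal.coe_mul, ← EReal.coe_mul, ← EReal.coe_add]
    apply EReal.coe_lt_coe_iff.2
    calc ∫ s, (φ (z s)).toReal ∂μ = ∫ s, h s ∂μ := rfl
      _ < ∫ s, G s ∂μ := hint
      _ = _ := hGint
end

section
/- Let ψ : E → ℝ be convex and differentiable at every point of E. Then the functional I_ψ : L∞_E(S,μ) → ℝ defined by I_ψ(x) = ∫_S ψ(x(s)) dμ(s) is well defined and Fréchet differentiable at every x ∈ L∞_E(S,μ), with Fréchet derivative the continuous linear functional g ↦ ∫_S ⟨∇ψ(x(s)), g(s)⟩ dμ(s). -/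
open MeasureTheory Filter Topology Set
open scoped ENNReal NNReal InnerProductSpace

section Aux
variable {α : Type*} {m : MeasurableSpace α} {μ : Measure α}
variable {E : Type*} [NormedAddCommGroup E]

private lemma aux_ae_norm_le (g : Lp E ⊤ μ) : ∀ᵐ s ∂μ, ‖g s‖ ≤ ‖g‖ := by
  have h := ae_le_eLpNormEssSup (f := ⇑g) (μ := μ)
  have hne : eLpNormEssSup (⇑g) μ ≠ ∞ := by
    have := Lp.eLpNorm_ne_top g; rwa [eLpNorm_exponent_top] at this
  filter_upwards [h] with s hs
  rw [Lp.norm_def, eLpNorm_exponent_top]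
  calc ‖g s‖ = ((‖g s‖₊ : ℝ≥0∞)).toReal := by simp
  _ ≤ (eLpNormEssSup (⇑g) μ).toReal := ENNReal.toReal_mono hne (by exact_mod_cast hs)

private lemma aux_div_abs_le {x r c : ℝ} (h : |x| ≤ c * r) (hr : 0 ≤ r) (hc : 0 ≤ c) :
    |x / r| ≤ c := by
  rcases hr.eq_or_lt with h0 | h0
  · have : x = 0 := by
      have : |x| ≤ 0 := by rw [← h0] at h; simpa using h
      exact abs_nonpos_iff.mp this
    simp [this, hc]
  · rw [abs_div, abs_of_pos h0, div_le_iff₀ h0]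
    exact h

variable [InnerProductSpace ℝ E] [FiniteDimensional ℝ E]

private lemma aux_lip {ψ : E → ℝ} (hconv : ConvexOn ℝ Set.univ ψ) (r : ℝ) :
    ∃ K : ℝ≥0, LipschitzOnWith K ψ (Metric.ball (0:E) r) := by
  have hcont : Continuous ψ := hconv.locallyLipschitz.continuous
  have hb : Bornology.IsBounded (ψ '' Metric.ball (0:E) (r+1)) := by
    refine (((isCompact_closedBall (0:E) (r+1)).image hcont).isBounded).subset ?_
    exact image_mono (f := ψ) Metric.ball_subset_closedBall
  exact (hconv.subset (subset_univ _) (convex_ball _ _)).exists_lipschitzOnWith_of_isBounded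
    (by linarith : r < r + 1) hb

private lemma aux_grad_norm_le {ψ : E → ℝ} (hdiff : Differentiable ℝ ψ) {K : ℝ≥0} {r : ℝ}
    (hK : LipschitzOnWith K ψ (Metric.ball (0:E) r)) {a : E} (ha : ‖a‖ < r) :
    ‖gradient ψ a‖ ≤ K := by
  have h1 : HasFDerivAt ψ (fderiv ℝ ψ a) a := (hdiff a).hasFDerivAt
  have h2 : ‖fderiv ℝ ψ a‖ ≤ K :=
    h1.le_of_lipschitzOn (Metric.isOpen_ball.mem_nhds (by
      simpa [Metric.mem_ball, dist_zero_right] using ha)) hK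
  have h3 : gradient ψ a = (InnerProductSpace.toDual ℝ E).symm (fderiv ℝ ψ a) := rfl
  rw [h3, LinearIsometryEquiv.norm_map]
  exact h2

private lemma aux_grad_meas {ψ : E → ℝ} [MeasurableSpace E] [BorelSpace E] :
    Measurable (gradient ψ) :=
  (InnerProductSpace.toDual ℝ E).symm.continuous.measurable.comp (measurable_fderiv ℝ ψ)

end Aux

set_option maxHeartbeats 1000000
set_option synthInstance.maxHeartbeats 400000

/-- **Fréchet differentiability of `I_ψ` on `L∞` for everywhere-differentiable convex
integrands.** If `ψ : ℝ^d → ℝ` is convex and differentiable everywhere, then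
`x ↦ ∫_S ψ(x(s)) dμ(s)` is Fréchet differentiable at every `x ∈ L∞_E(S,μ)`, with derivative
`g ↦ ∫_S ⟨∇ψ(x(s)), g(s)⟩ dμ(s)`. -/
theorem stmt_4 {S : Type*} [MeasurableSpace S] (μ : Measure S)
    [IsFiniteMeasure μ] [μ.IsComplete] (hμ : μ ≠ 0) (d : ℕ) (hd : 1 ≤ d)
    (ψ : EuclideanSpace ℝ (Fin d) → ℝ)
    (hconv : ConvexOn ℝ Set.univ ψ)
    (hdiff : Differentiable ℝ ψ) :
    ∀ x : Lp (EuclideanSpace ℝ (Fin d)) ⊤ μ,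
      ∃ D : Lp (EuclideanSpace ℝ (Fin d)) ⊤ μ →L[ℝ] ℝ,
        (∀ g : Lp (EuclideanSpace ℝ (Fin d)) ⊤ μ,
          D g = ∫ s, (inner ℝ (gradient ψ (x s)) (g s) : ℝ) ∂μ) ∧
        HasFDerivAt (fun y : Lp (EuclideanSpace ℝ (Fin d)) ⊤ μ => ∫ s, ψ (y s) ∂μ) D x := by
  intro x
  have ψcont : Continuous ψ := hconv.locallyLipschitz.continuous
  -- integrability of ψ ∘ y
  have hIψ : ∀ y : Lp (EuclideanSpace ℝ (Fin d)) ⊤ μ, Integrable (fun s => ψ (y s)) μ := by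
    intro y
    obtain ⟨M, hM⟩ := (isCompact_closedBall (0 : EuclideanSpace ℝ (Fin d))
      ‖y‖).exists_bound_of_continuousOn ψcont.continuousOn
    refine (integrable_const M).mono'
      (ψcont.comp_aestronglyMeasurable (Lp.aestronglyMeasurable y)) ?_
    filter_upwards [aux_ae_norm_le y] with s hs
    exact hM _ (by simpa [Metric.mem_closedBall, dist_eq_norm] using hs)
  obtain ⟨K, hK⟩ := aux_lip hconv (‖x‖ + 2)
  have hxle : ∀ᵐ s ∂μ, ‖x s‖ ≤ ‖x‖ := aux_ae_norm_le x
  set F : S → EuclideanSpace ℝ (Fin d) := fun s => gradient ψ (x s) with hF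
  have hFmeas : AEStronglyMeasurable F μ :=
    (aux_grad_meas.comp_aemeasurable
      (Lp.aestronglyMeasurable x).aemeasurable).aestronglyMeasurable
  have hFbd : ∀ᵐ s ∂μ, ‖F s‖ ≤ K := by
    filter_upwards [hxle] with s hs
    exact aux_grad_norm_le hdiff hK (by have := norm_nonneg x; linarith)
  have hInt : ∀ g : Lp (EuclideanSpace ℝ (Fin d)) ⊤ μ,
      Integrable (fun s => (inner ℝ (F s) (g s) : ℝ)) μ := by
    intro g
    refine (integrable_const ((K : ℝ) * ‖g‖)).mono'
      (hFmeas.inner (Lp.aestronglyMeasurable g)) ?_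
    filter_upwards [hFbd, aux_ae_norm_le g] with s h1 h2
    calc ‖(inner ℝ (F s) (g s) : ℝ)‖ ≤ ‖F s‖ * ‖g s‖ := norm_inner_le_norm _ _
    _ ≤ (K : ℝ) * ‖g‖ := mul_le_mul h1 h2 (norm_nonneg _) K.coe_nonneg
  -- the candidate derivative
  let D₀ : Lp (EuclideanSpace ℝ (Fin d)) ⊤ μ →ₗ[ℝ] ℝ :=
    { toFun := fun g => ∫ s, (inner ℝ (F s) (g s) : ℝ) ∂μ
      map_add' := by
        intro g g'
        rw [← integral_add (hInt g) (hInt g')]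
        refine integral_congr_ae ?_
        filter_upwards [Lp.coeFn_add g g'] with s hs
        simp only [hs, Pi.add_apply, inner_add_right]
      map_smul' := by
        intro c g
        rw [RingHom.id_apply, ← integral_smul]
        refine integral_congr_ae ?_
        filter_upwards [Lp.coeFn_smul c g] with s hs
        simp only [hs, Pi.smul_apply, inner_smul_right, smul_eq_mul] }
  have hDbound : ∀ g, ‖D₀ g‖ ≤ ((K : ℝ) * (μ univ).toReal) * ‖g‖ := by
    intro g
    have hb : ∀ᵐ s ∂μ, ‖(inner ℝ (F s) (g s) : ℝ)‖ ≤ (K : ℝ) * ‖g‖ := by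
      filter_upwards [hFbd, aux_ae_norm_le g] with s h1 h2
      calc ‖(inner ℝ (F s) (g s) : ℝ)‖ ≤ ‖F s‖ * ‖g s‖ := norm_inner_le_norm _ _
      _ ≤ (K : ℝ) * ‖g‖ := mul_le_mul h1 h2 (norm_nonneg _) K.coe_nonneg
    calc ‖D₀ g‖ ≤ ((K : ℝ) * ‖g‖) * (μ univ).toReal :=
          norm_integral_le_of_norm_le_const hb
    _ = ((K : ℝ) * (μ univ).toReal) * ‖g‖ := by ring
  refine ⟨LinearMap.mkContinuous D₀ _ hDbound, fun g => rfl, ?_⟩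
  set D := LinearMap.mkContinuous D₀ ((K : ℝ) * (μ univ).toReal) hDbound with hD
  have hDapp : ∀ g, D g = ∫ s, (inner ℝ (F s) (g s) : ℝ) ∂μ := fun g => rfl
  rw [hasFDerivAt_iff_isLittleO_nhds_zero]
  rw [← Asymptotics.isLittleO_norm_right]
  have hzero : ∀ h : Lp (EuclideanSpace ℝ (Fin d)) ⊤ μ, ‖h‖ = 0 →
      ((∫ s, ψ ((x + h) s) ∂μ) - (∫ s, ψ (x s) ∂μ)) - D h = 0 := by
    intro h hh
    have : h = 0 := norm_eq_zero.mp hh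
    simp [this]
  rw [Asymptotics.isLittleO_iff_tendsto hzero]
  rw [tendsto_iff_seq_tendsto]
  intro u hu
  simp only [Function.comp_def]
  have hun : Tendsto (fun n => ‖u n‖) atTop (𝓝 0) := by
    simpa [Function.comp_def] using (continuous_norm.tendsto
      (0 : Lp (EuclideanSpace ℝ (Fin d)) ⊤ μ)).comp hu
  obtain ⟨C, hC⟩ : ∃ C : ℝ, ∀ n, ‖u n‖ ≤ C := by
    obtain ⟨C, hC⟩ := hun.bddAbove_range
    exact ⟨C, fun n => hC ⟨n, rfl⟩⟩
  have hC0 : (0:ℝ) ≤ C := (norm_nonneg (u 0)).trans (hC 0)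
  obtain ⟨K', hK'⟩ := aux_lip hconv (‖x‖ + C + 2)
  have hae : ∀ᵐ s ∂μ, ‖x s‖ ≤ ‖x‖ ∧ (∀ n, ‖(u n) s‖ ≤ ‖u n‖) ∧
      (∀ n, (x + u n) s = x s + (u n) s) := by
    refine hxle.and (Filter.Eventually.and ?_ ?_)
    · exact ae_all_iff.2 fun n => aux_ae_norm_le (u n)
    · refine ae_all_iff.2 fun n => ?_
      filter_upwards [Lp.coeFn_add x (u n)] with s hs
      exact hs
  set num : ℕ → S → ℝ :=
    fun n s => ψ (x s + (u n) s) - ψ (x s) - (inner ℝ (F s) ((u n) s) : ℝ) with hnum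
  have hIψ' : ∀ n, Integrable (fun s => ψ (x s + (u n) s)) μ := by
    intro n
    refine (hIψ (x + u n)).congr ?_
    filter_upwards [Lp.coeFn_add x (u n)] with s hs
    rw [hs, Pi.add_apply]
  have key : ∀ n, ((∫ s, ψ ((x + u n) s) ∂μ) - (∫ s, ψ (x s) ∂μ)) - D (u n)
      = ∫ s, num n s ∂μ := by
    intro n
    have h1 : (∫ s, ψ ((x + u n) s) ∂μ) = ∫ s, ψ (x s + (u n) s) ∂μ := by
      refine integral_congr_ae ?_
      filter_upwards [Lp.coeFn_add x (u n)] with s hs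
      rw [hs, Pi.add_apply]
    have hsub : Integrable (fun s => ψ (x s + (u n) s) - ψ (x s)) μ :=
      (hIψ' n).sub (hIψ x)
    rw [h1, hDapp, ← integral_sub (hIψ' n) (hIψ x), ← integral_sub hsub (hInt (u n))]
  have hgradK' : ∀ s : S, ‖x s‖ ≤ ‖x‖ → ‖F s‖ ≤ K' :=
    fun s hs => aux_grad_norm_le hdiff hK' (by linarith)
  have hmeas : ∀ n, AEStronglyMeasurable (fun s => num n s / ‖u n‖) μ := by
    intro n
    have m1 : AEStronglyMeasurable (fun s => ψ (x s + (u n) s)) μ :=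
      ψcont.comp_aestronglyMeasurable
        ((Lp.aestronglyMeasurable x).add (Lp.aestronglyMeasurable (u n)))
    have m2 : AEStronglyMeasurable (fun s => ψ (x s)) μ :=
      ψcont.comp_aestronglyMeasurable (Lp.aestronglyMeasurable x)
    have m3 : AEStronglyMeasurable (fun s => (inner ℝ (F s) ((u n) s) : ℝ)) μ :=
      hFmeas.inner (Lp.aestronglyMeasurable (u n))
    have m4 : AEStronglyMeasurable (fun s => num n s * (‖u n‖)⁻¹) μ :=
      ((m1.sub m2).sub m3).mul aestronglyMeasurable_const
    simpa [div_eq_mul_inv] using m4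
  have hbd : ∀ n, ∀ᵐ s ∂μ, ‖num n s / ‖u n‖‖ ≤ (2 * K' : ℝ) := by
    intro n
    filter_upwards [hae] with s ⟨hs1, hs2, _⟩
    have hnum_le : |num n s| ≤ (2 * K') * ‖u n‖ := by
      have hball1 : x s ∈ Metric.ball (0 : EuclideanSpace ℝ (Fin d)) (‖x‖ + C + 2) := by
        simp only [Metric.mem_ball, dist_zero_right]; linarith
      have hball2 : x s + (u n) s ∈ Metric.ball (0 : EuclideanSpace ℝ (Fin d))
          (‖x‖ + C + 2) := by
        simp only [Metric.mem_ball, dist_zero_right]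
        calc ‖x s + (u n) s‖ ≤ ‖x s‖ + ‖(u n) s‖ := norm_add_le _ _
        _ ≤ ‖x‖ + C := by have := (hs2 n).trans (hC n); linarith
        _ < ‖x‖ + C + 2 := by linarith
      have h1 : |ψ (x s + (u n) s) - ψ (x s)| ≤ (K' : ℝ) * ‖(u n) s‖ := by
        have := hK'.norm_sub_le hball2 hball1
        simpa [add_sub_cancel_left] using this
      have h2 : |(inner ℝ (F s) ((u n) s) : ℝ)| ≤ (K' : ℝ) * ‖(u n) s‖ := by
        calc |(inner ℝ (F s) ((u n) s) : ℝ)| ≤ ‖F s‖ * ‖(u n) s‖ := abs_real_inner_le_norm _ _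
        _ ≤ (K' : ℝ) * ‖(u n) s‖ :=
          mul_le_mul_of_nonneg_right (hgradK' s hs1) (norm_nonneg _)
      calc |num n s| ≤ |ψ (x s + (u n) s) - ψ (x s)| + |(inner ℝ (F s) ((u n) s) : ℝ)| :=
            abs_sub _ _
      _ ≤ (K' : ℝ) * ‖(u n) s‖ + (K' : ℝ) * ‖(u n) s‖ := add_le_add h1 h2
      _ = (2 * K') * ‖(u n) s‖ := by ring
      _ ≤ (2 * K') * ‖u n‖ := by
          exact mul_le_mul_of_nonneg_left (hs2 n) (by positivity)
    rw [Real.norm_eq_abs]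
    exact aux_div_abs_le hnum_le (norm_nonneg _) (by positivity)
  have hlim : ∀ᵐ s ∂μ, Tendsto (fun n => num n s / ‖u n‖) atTop (𝓝 0) := by
    filter_upwards [hae] with s ⟨hs1, hs2, _⟩
    rw [Metric.tendsto_atTop]
    intro ε hε
    have hgrad : HasFDerivAt ψ ((InnerProductSpace.toDual ℝ _) (gradient ψ (x s))) (x s) :=
      ((hdiff (x s)).hasGradientAt).hasFDerivAt
    have hlo := hasFDerivAt_iff_isLittleO_nhds_zero.1 hgrad
    have hev := hlo.def (show (0:ℝ) < ε/2 by linarith)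
    rw [Metric.eventually_nhds_iff] at hev
    obtain ⟨δ, hδ, hball⟩ := hev
    obtain ⟨N, hN⟩ := eventually_atTop.1 (hun.eventually_lt_const hδ)
    refine ⟨N, fun n hn => ?_⟩
    have hvδ : dist ((u n) s) (0 : EuclideanSpace ℝ (Fin d)) < δ := by
      rw [dist_zero_right]; exact lt_of_le_of_lt (hs2 n) (hN n hn)
    have hb := hball hvδ
    simp only [InnerProductSpace.toDual_apply_apply] at hb
    have hnum_le : |num n s| ≤ (ε/2) * ‖u n‖ := by
      calc |num n s| ≤ (ε/2) * ‖(u n) s‖ := by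
            have e : (inner ℝ (F s) ((u n) s) : ℝ) = (fderiv ℝ ψ (x s)) ((u n) s) := by
              simp [hF, gradient, InnerProductSpace.toDual_symm_apply]
            simpa [Real.norm_eq_abs, hnum, e] using hb
      _ ≤ (ε/2) * ‖u n‖ := mul_le_mul_of_nonneg_left (hs2 n) (by linarith)
    rw [Real.dist_eq, sub_zero]
    calc |num n s / ‖u n‖| ≤ ε/2 :=
          aux_div_abs_le hnum_le (norm_nonneg _) (by linarith)
    _ < ε := by linarith
  have hdc := tendsto_integral_of_dominated_convergence
    (fun _ => (2 * K' : ℝ)) hmeas (integrable_const _) hbd hlim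
  rw [integral_zero] at hdc
  refine hdc.congr fun n => ?_
  rw [key n, integral_div]
end

section
/- Let φ : E → ℝ ∪ {+∞} be proper, lower semicontinuous and convex with int dom φ ≠ ∅. Then the subdifferential ∂φ is single-valued (for every v ∈ E, ∂φ(v) contains at most one element; given int dom φ ≠ ∅ this is equivalent to φ being essentially smooth) if and only if ∂I_φ is single-valued, i.e. for every x ∈ L¹_E(S,μ) with I_φ(x) < +∞, any two subgradients x*, y* ∈ ∂I_φ(x) coincide μ-almost everywhere. -/
open MeasureTheory Filter Topology Set

/-- The convex subdifferential of `φ : ℝ^d → ℝ ∪ {+∞}` at `v`: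
`∂φ(v) = {v* : φ(w) ≥ φ(v) + ⟨v*, w − v⟩ for all w}`. -/
def subdiff {d : ℕ} (φ : EuclideanSpace ℝ (Fin d) → EReal)
    (v : EuclideanSpace ℝ (Fin d)) : Set (EuclideanSpace ℝ (Fin d)) :=
  {vs | ∀ w, φ v + ((inner ℝ vs (w - v) : ℝ) : EReal) ≤ φ w}

/-- `xs ∈ L∞_E(S,μ)` is a subgradient of `I_φ` at `x`:
`I_φ(y) ≥ I_φ(x) + ∫_S ⟨xs(s), y(s) − x(s)⟩ dμ(s)` for all `y ∈ L¹_E(S,μ)`. -/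
def IsSubgradIphi {S : Type*} [MeasurableSpace S] (μ : Measure S) {d : ℕ}
    (φ : EuclideanSpace ℝ (Fin d) → EReal)
    (x xs : S → EuclideanSpace ℝ (Fin d)) : Prop :=
  MemLp xs ⊤ μ ∧
    ∀ y : S → EuclideanSpace ℝ (Fin d), Integrable y μ →
      Iphi μ φ x + ((∫ s, (inner ℝ (xs s) (y s - x s) : ℝ) ∂μ : ℝ) : EReal) ≤ Iphi μ φ y

section aux
variable {d : ℕ} {φ : EuclideanSpace ℝ (Fin d) → EReal}

lemma aux_coe (hbot : ∀ v, φ v ≠ ⊥) {v : EuclideanSpace ℝ (Fin d)} (hv : φ v ≠ ⊤) :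
    φ v = (((φ v).toReal : ℝ) : EReal) := (EReal.coe_toReal hv (hbot v)).symm

lemma aux_dom_convex (hbot : ∀ v, φ v ≠ ⊥)
    (hconv : ∀ u v : EuclideanSpace ℝ (Fin d), ∀ t : ℝ, 0 ≤ t → t ≤ 1 →
      φ (t • u + (1 - t) • v) ≤ (t : EReal) * φ u + ((1 - t : ℝ) : EReal) * φ v) :
    Convex ℝ {v : EuclideanSpace ℝ (Fin d) | φ v ≠ ⊤} := by
  intro u hu v hv a b ha hb hab
  have h1a : a ≤ 1 := by linarith
  have h := hconv u v a ha h1a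
  have hb' : (1:ℝ) - a = b := by linarith
  rw [hb'] at h
  simp only [mem_setOf_eq] at hu hv ⊢
  rw [aux_coe hbot hu, aux_coe hbot hv, ← EReal.coe_mul, ← EReal.coe_mul,
    ← EReal.coe_add] at h
  exact ne_top_of_le_ne_top (EReal.coe_ne_top _) h

lemma aux_convexOn (hbot : ∀ v, φ v ≠ ⊥)
    (hconv : ∀ u v : EuclideanSpace ℝ (Fin d), ∀ t : ℝ, 0 ≤ t → t ≤ 1 →
      φ (t • u + (1 - t) • v) ≤ (t : EReal) * φ u + ((1 - t : ℝ) : EReal) * φ v) :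
    ConvexOn ℝ {v : EuclideanSpace ℝ (Fin d) | φ v ≠ ⊤} (fun v => (φ v).toReal) := by
  refine ⟨aux_dom_convex hbot hconv, ?_⟩
  intro u hu v hv a b ha hb hab
  have h1a : a ≤ 1 := by linarith
  have h := hconv u v a ha h1a
  have hb' : (1:ℝ) - a = b := by linarith
  rw [hb'] at h
  simp only [mem_setOf_eq] at hu hv
  rw [aux_coe hbot hu, aux_coe hbot hv, ← EReal.coe_mul, ← EReal.coe_mul,
    ← EReal.coe_add] at h
  have := EReal.toReal_le_toReal h (hbot _) (EReal.coe_ne_top _)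
  rw [EReal.toReal_coe] at this
  simpa [smul_eq_mul] using this

lemma aux_extend (hbot : ∀ v, φ v ≠ ⊥)
    (hconv : ∀ u v : EuclideanSpace ℝ (Fin d), ∀ t : ℝ, 0 ≤ t → t ≤ 1 →
      φ (t • u + (1 - t) • v) ≤ (t : EReal) * φ u + ((1 - t : ℝ) : EReal) * φ v)
    {u0 : EuclideanSpace ℝ (Fin d)} (hu0 : u0 ∈ interior {v | φ v ≠ ⊤})
    {v a : EuclideanSpace ℝ (Fin d)} (hv : φ v ≠ ⊤)
    (h : ∀ w ∈ interior {v : EuclideanSpace ℝ (Fin d) | φ v ≠ ⊤},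
      φ v + ((inner ℝ a (w - v) : ℝ) : EReal) ≤ φ w) :
    a ∈ subdiff φ v := by
  intro w
  by_cases hw : φ w = ⊤
  · rw [hw, aux_coe hbot hv, ← EReal.coe_add]; exact le_top
  · have key : ∀ t : ℝ, 0 < t → t ≤ 1 →
        (φ v).toReal + (inner ℝ a ((t • u0 + (1-t) • w) - v) : ℝ)
          ≤ t * (φ u0).toReal + (1-t) * (φ w).toReal := by
      intro t ht ht1
      have hwt : t • u0 + (1-t) • w ∈ interior {v : EuclideanSpace ℝ (Fin d) | φ v ≠ ⊤} :=
        (aux_dom_convex hbot hconv).combo_interior_self_mem_interior hu0 hw ht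
          (by linarith) (by ring)
      have h1 := h _ hwt
      have h2 := hconv u0 w t ht.le ht1
      have hu0' : φ u0 ≠ ⊤ := interior_subset hu0
      have hwt' : φ (t • u0 + (1-t) • w) ≠ ⊤ := interior_subset hwt
      rw [aux_coe hbot hv, ← EReal.coe_add, aux_coe hbot hwt'] at h1
      rw [aux_coe hbot hu0', aux_coe hbot hw, ← EReal.coe_mul, ← EReal.coe_mul,
        ← EReal.coe_add, aux_coe hbot hwt'] at h2
      have := le_trans h1 h2
      exact_mod_cast this
    have hc : Continuous (fun t : ℝ => t * (φ u0).toReal + (1-t) * (φ w).toReal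
        - ((φ v).toReal + (inner ℝ a ((t • u0 + (1-t) • w) - v) : ℝ))) := by
      have hin : Continuous (fun t : ℝ => (inner ℝ a ((t • u0 + (1-t) • w) - v) : ℝ)) :=
        Continuous.inner continuous_const
          (((continuous_id.smul continuous_const).add
            ((continuous_const.sub continuous_id).smul continuous_const)).sub continuous_const)
      exact ((continuous_id.mul continuous_const).add
        ((continuous_const.sub continuous_id).mul continuous_const)).sub
        (continuous_const.add hin)
    have hlim : Tendsto (fun t : ℝ => t * (φ u0).toReal + (1-t) * (φ w).toReal
        - ((φ v).toReal + (inner ℝ a ((t • u0 + (1-t) • w) - v) : ℝ))) (𝓝[>] (0:ℝ))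
        (𝓝 ((φ w).toReal - ((φ v).toReal + (inner ℝ a (w - v) : ℝ)))) := by
      have h0 : Tendsto _ (𝓝[>] (0:ℝ)) _ := (hc.tendsto 0).mono_left nhdsWithin_le_nhds
      simpa using h0
    have hev : ∀ᶠ t in 𝓝[>] (0:ℝ), 0 ≤ t * (φ u0).toReal + (1-t) * (φ w).toReal
        - ((φ v).toReal + (inner ℝ a ((t • u0 + (1-t) • w) - v) : ℝ)) := by
      filter_upwards [Ioc_mem_nhdsGT_of_mem (Set.mem_Ico.2 ⟨le_refl (0:ℝ), zero_lt_one⟩)]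
        with t ht
      exact sub_nonneg.2 (key t ht.1 ht.2)
    have hfin : 0 ≤ (φ w).toReal - ((φ v).toReal + (inner ℝ a (w - v) : ℝ)) :=
      ge_of_tendsto hlim hev
    have hre : (φ v).toReal + (inner ℝ a (w - v) : ℝ) ≤ (φ w).toReal := by linarith
    rw [aux_coe hbot hv, aux_coe hbot hw, ← EReal.coe_add]
    exact_mod_cast hre

lemma aux_dense_extend (hbot : ∀ v, φ v ≠ ⊥)
    (hcont : ContinuousOn (fun u => (φ u).toReal)
      (interior {v : EuclideanSpace ℝ (Fin d) | φ v ≠ ⊤}))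
    {D : Set (EuclideanSpace ℝ (Fin d))}
    (hD : D ⊆ interior {v : EuclideanSpace ℝ (Fin d) | φ v ≠ ⊤})
    (hDd : ∀ w ∈ interior {v : EuclideanSpace ℝ (Fin d) | φ v ≠ ⊤}, w ∈ closure D)
    {v a : EuclideanSpace ℝ (Fin d)} (hv : φ v ≠ ⊤)
    (h : ∀ w ∈ D, (φ v).toReal + (inner ℝ a (w - v) : ℝ) ≤ (φ w).toReal) :
    ∀ w ∈ interior {v : EuclideanSpace ℝ (Fin d) | φ v ≠ ⊤},
      φ v + ((inner ℝ a (w - v) : ℝ) : EReal) ≤ φ w := by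
  intro w hw
  set g : EuclideanSpace ℝ (Fin d) → ℝ :=
    fun u => (φ u).toReal - ((φ v).toReal + (inner ℝ a (u - v) : ℝ)) with hgdef
  have hginner : Continuous (fun u : EuclideanSpace ℝ (Fin d) =>
      (φ v).toReal + (inner ℝ a (u - v) : ℝ)) :=
    continuous_const.add (Continuous.inner continuous_const (continuous_id.sub continuous_const))
  have hg : ContinuousWithinAt g (interior {v : EuclideanSpace ℝ (Fin d) | φ v ≠ ⊤}) w :=
    ((hcont.sub hginner.continuousOn) w hw)
  have hne : (𝓝[D] w).NeBot := mem_closure_iff_nhdsWithin_neBot.1 (hDd w hw)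
  have htend : Tendsto g (𝓝[D] w) (𝓝 (g w)) := hg.mono hD
  have hge : 0 ≤ g w := by
    refine ge_of_tendsto htend ?_
    exact eventually_nhdsWithin_of_forall (fun u hu => sub_nonneg.2 (h u hu))
  have hw' : φ w ≠ ⊤ := interior_subset hw
  have hre : (φ v).toReal + (inner ℝ a (w - v) : ℝ) ≤ (φ w).toReal := by
    simp only [hgdef] at hge; linarith
  rw [aux_coe hbot hv, aux_coe hbot hw', ← EReal.coe_add]
  exact_mod_cast hre

end aux

section aux3
variable {S : Type*} [MeasurableSpace S] {μ : Measure S} [IsFiniteMeasure μ]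
  {d : ℕ} {φ : EuclideanSpace ℝ (Fin d) → EReal}
  {x xs : S → EuclideanSpace ℝ (Fin d)}

omit [IsFiniteMeasure μ] in
lemma aux_bdd (hmem : MemLp xs ⊤ μ) :
    ∀ᵐ s ∂μ, ‖xs s‖ ≤ (eLpNormEssSup xs μ).toReal := by
  have h2 : eLpNormEssSup xs μ ≠ ⊤ := by
    have := hmem.2
    rw [eLpNorm_exponent_top] at this
    exact this.ne
  filter_upwards [ae_le_eLpNormEssSup (f := xs) (μ := μ)] with s hs
  have h3 := ENNReal.toReal_mono h2 hs
  simpa using h3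

lemma aux_inner_int (hx : Integrable x μ) (hmem : MemLp xs ⊤ μ)
    (w : EuclideanSpace ℝ (Fin d)) :
    Integrable (fun s => (inner ℝ (xs s) (w - x s) : ℝ)) μ := by
  refine Integrable.mono' (((integrable_const w).sub hx).norm.const_mul
    ((eLpNormEssSup xs μ).toReal)) ?_ ?_
  · exact AEStronglyMeasurable.inner hmem.aestronglyMeasurable
      (aestronglyMeasurable_const.sub hx.aestronglyMeasurable)
  · filter_upwards [aux_bdd hmem] with s hs
    calc ‖(inner ℝ (xs s) (w - x s) : ℝ)‖ ≤ ‖xs s‖ * ‖w - x s‖ := norm_inner_le_norm _ _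
      _ ≤ (eLpNormEssSup xs μ).toReal * ‖w - x s‖ :=
        mul_le_mul_of_nonneg_right hs (norm_nonneg _)

lemma aux_pointwise (hx : Integrable x μ)
    (hxint : Integrable (fun s => (φ (x s)).toReal) μ)
    (hxfin : ∀ᵐ s ∂μ, φ (x s) ≠ ⊤)
    (hxs : IsSubgradIphi μ φ x xs)
    {w : EuclideanSpace ℝ (Fin d)} (hw : φ w ≠ ⊤) :
    ∀ᵐ s ∂μ, (φ (x s)).toReal + (inner ℝ (xs s) (w - x s) : ℝ) ≤ (φ w).toReal := by
  obtain ⟨hmem, hsub⟩ := hxs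
  have hIx : Iphi μ φ x = ((∫ s, (φ (x s)).toReal ∂μ : ℝ) : EReal) := if_pos ⟨hxint, hxfin⟩
  have hinner_int := aux_inner_int hx hmem w
  set g : S → ℝ := fun s => (φ w).toReal - (φ (x s)).toReal - (inner ℝ (xs s) (w - x s) : ℝ)
    with hgdef
  have hg_int : Integrable g μ := ((integrable_const _).sub hxint).sub hinner_int
  have key : ∀ A : Set S, MeasurableSet A → 0 ≤ ∫ s in A, g s ∂μ := by
    intro A hA
    set y : S → EuclideanSpace ℝ (Fin d) :=
      fun s => x s + A.indicator (fun s' => w - x s') s with hydef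
    have hyA : ∀ s ∈ A, y s = w := by
      intro s hs; simp [hydef, Set.indicator_of_mem hs]
    have hyA' : ∀ s ∉ A, y s = x s := by
      intro s hs; simp [hydef, Set.indicator_of_notMem hs]
    have hy_int : Integrable y μ :=
      hx.add (((integrable_const w).sub hx).indicator hA)
    have hyφ : (fun s => (φ (y s)).toReal)
        = fun s => (φ (x s)).toReal
          + A.indicator (fun s' => (φ w).toReal - (φ (x s')).toReal) s := by
      funext s
      by_cases hs : s ∈ A
      · simp [hyA s hs, Set.indicator_of_mem hs]
      · simp [hyA' s hs, Set.indicator_of_notMem hs]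
    have hdiff_int : Integrable (fun s' => (φ w).toReal - (φ (x s')).toReal) μ :=
      (integrable_const _).sub hxint
    have hind_int : Integrable
        (fun s => A.indicator (fun s' => (φ w).toReal - (φ (x s')).toReal) s) μ :=
      hdiff_int.indicator hA
    have hyφ_int : Integrable (fun s => (φ (y s)).toReal) μ := by
      rw [hyφ]
      exact hxint.add hind_int
    have hyfin : ∀ᵐ s ∂μ, φ (y s) ≠ ⊤ := by
      filter_upwards [hxfin] with s hs
      by_cases hsA : s ∈ A
      · rw [hyA s hsA]; exact hw
      · rw [hyA' s hsA]; exact hs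
    have hIy : Iphi μ φ y = ((∫ s, (φ (y s)).toReal ∂μ : ℝ) : EReal) := if_pos ⟨hyφ_int, hyfin⟩
    have hineq := hsub y hy_int
    rw [hIx, hIy, ← EReal.coe_add, EReal.coe_le_coe_iff] at hineq
    have hyx : (fun s => (inner ℝ (xs s) (y s - x s) : ℝ))
        = fun s => A.indicator (fun s' => (inner ℝ (xs s') (w - x s') : ℝ)) s := by
      funext s
      by_cases hs : s ∈ A
      · simp [hyA s hs, Set.indicator_of_mem hs]
      · simp [hyA' s hs, Set.indicator_of_notMem hs]
    rw [hyx, integral_indicator hA, hyφ,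
      integral_add hxint hind_int, integral_indicator hA] at hineq
    have h2 : ∫ s in A, (inner ℝ (xs s) (w - x s) : ℝ) ∂μ
        ≤ ∫ s in A, ((φ w).toReal - (φ (x s)).toReal) ∂μ := by linarith
    have : 0 ≤ ∫ s in A, (((φ w).toReal - (φ (x s)).toReal)
        - (inner ℝ (xs s) (w - x s) : ℝ)) ∂μ := by
      rw [integral_sub hdiff_int.integrableOn hinner_int.integrableOn]
      linarith
    simpa [hgdef, sub_sub] using this
  have := ae_nonneg_of_forall_setIntegral_nonneg hg_int
    (fun A hA _ => key A hA)
  filter_upwards [this] with s hs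
  simp only [hgdef, Pi.zero_apply] at hs
  linarith

end aux3

/-- **Single-valuedness of `∂φ` is equivalent to single-valuedness of `∂I_φ`** for a proper
lower semicontinuous convex `φ : ℝ^d → ℝ ∪ {+∞}` whose domain has nonempty interior. -/
theorem stmt_6 {S : Type*} [MeasurableSpace S] (μ : Measure S)
    [IsFiniteMeasure μ] [μ.IsComplete] (hμ : μ ≠ 0) (d : ℕ) (hd : 1 ≤ d)
    (φ : EuclideanSpace ℝ (Fin d) → EReal)
    (hproper : (∀ v, φ v ≠ ⊥) ∧ (∃ v, φ v ≠ ⊤))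
    (hlsc : LowerSemicontinuous φ)
    (hconv : ∀ u v : EuclideanSpace ℝ (Fin d), ∀ t : ℝ, 0 ≤ t → t ≤ 1 →
      φ (t • u + (1 - t) • v) ≤ (t : EReal) * φ u + ((1 - t : ℝ) : EReal) * φ v)
    (hint : (interior {v : EuclideanSpace ℝ (Fin d) | φ v ≠ ⊤}).Nonempty) :
    (∀ v : EuclideanSpace ℝ (Fin d), ∀ a ∈ subdiff φ v, ∀ b ∈ subdiff φ v, a = b)
      ↔
    (∀ x : S → EuclideanSpace ℝ (Fin d), Integrable x μ → Iphi μ φ x ≠ ⊤ →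
      ∀ xs ys : S → EuclideanSpace ℝ (Fin d),
        IsSubgradIphi μ φ x xs → IsSubgradIphi μ φ x ys → xs =ᵐ[μ] ys) := by
  obtain ⟨hbot, hex⟩ := hproper
  obtain ⟨u0, hu0⟩ := hint
  constructor
  · -- forward direction
    intro hsingle x hxI hIxne xs ys hxs hys
    have hcond : Integrable (fun s => (φ (x s)).toReal) μ ∧ ∀ᵐ s ∂μ, φ (x s) ≠ ⊤ := by
      by_contra h; exact hIxne (if_neg h)
    obtain ⟨hxint, hxfin⟩ := hcond
    -- countable dense subset of the interior of the domain
    obtain ⟨T, hTc, hTd⟩ := TopologicalSpace.exists_countable_dense (EuclideanSpace ℝ (Fin d))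
    set D : Set (EuclideanSpace ℝ (Fin d)) :=
      T ∩ interior {v : EuclideanSpace ℝ (Fin d) | φ v ≠ ⊤} with hDdef
    have hDsub : D ⊆ interior {v : EuclideanSpace ℝ (Fin d) | φ v ≠ ⊤} := inter_subset_right
    have hDc : D.Countable := hTc.mono inter_subset_left
    have hDd : ∀ w ∈ interior {v : EuclideanSpace ℝ (Fin d) | φ v ≠ ⊤}, w ∈ closure D := by
      intro w hw
      rw [mem_closure_iff]
      intro V hV hwV
      obtain ⟨t, htV, htT⟩ := hTd.inter_open_nonempty
        (V ∩ interior {v : EuclideanSpace ℝ (Fin d) | φ v ≠ ⊤})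
        (hV.inter isOpen_interior) ⟨w, hwV, hw⟩
      exact ⟨t, htV.1, htT, htV.2⟩
    have hcont : ContinuousOn (fun u => (φ u).toReal)
        (interior {v : EuclideanSpace ℝ (Fin d) | φ v ≠ ⊤}) :=
      (aux_convexOn hbot hconv).continuousOn_interior
    have hxsae : ∀ᵐ s ∂μ, ∀ w ∈ D,
        (φ (x s)).toReal + (inner ℝ (xs s) (w - x s) : ℝ) ≤ (φ w).toReal :=
      (ae_ball_iff hDc).2 (fun w hw =>
        aux_pointwise hxI hxint hxfin hxs (interior_subset (hDsub hw)))
    have hysae : ∀ᵐ s ∂μ, ∀ w ∈ D,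
        (φ (x s)).toReal + (inner ℝ (ys s) (w - x s) : ℝ) ≤ (φ w).toReal :=
      (ae_ball_iff hDc).2 (fun w hw =>
        aux_pointwise hxI hxint hxfin hys (interior_subset (hDsub hw)))
    filter_upwards [hxsae, hysae, hxfin] with s hs1 hs2 hs3
    have hxsub : xs s ∈ subdiff φ (x s) :=
      aux_extend hbot hconv hu0 hs3
        (aux_dense_extend hbot hcont hDsub hDd hs3 hs1)
    have hysub : ys s ∈ subdiff φ (x s) :=
      aux_extend hbot hconv hu0 hs3
        (aux_dense_extend hbot hcont hDsub hDd hs3 hs2)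
    exact hsingle (x s) _ hxsub _ hysub
  · -- backward direction
    intro H v a ha b hb
    obtain ⟨w0, hw0⟩ := hex
    have hv : φ v ≠ ⊤ := by
      intro hvt
      have h1 := ha w0
      rw [hvt, EReal.top_add_of_ne_bot (EReal.coe_ne_bot _)] at h1
      exact hw0 (top_le_iff.1 h1)
    have hIxcond : Integrable (fun s : S => (φ ((fun _ => v) s)).toReal) μ
        ∧ ∀ᵐ s ∂μ, φ ((fun _ : S => v) s) ≠ ⊤ :=
      ⟨integrable_const _, Eventually.of_forall fun _ => hv⟩
    have hIx : Iphi μ φ (fun _ : S => v)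
        = ((∫ _ : S, (φ v).toReal ∂μ : ℝ) : EReal) := if_pos hIxcond
    have hIxne : Iphi μ φ (fun _ : S => v) ≠ ⊤ := by
      rw [hIx]; exact EReal.coe_ne_top _
    have hsg : ∀ c, c ∈ subdiff φ v → IsSubgradIphi μ φ (fun _ => v) (fun _ => c) := by
      intro c hc
      refine ⟨memLp_const c, ?_⟩
      intro y hy
      by_cases hcy : Integrable (fun s => (φ (y s)).toReal) μ ∧ ∀ᵐ s ∂μ, φ (y s) ≠ ⊤
      · have hIy : Iphi μ φ y = ((∫ s, (φ (y s)).toReal ∂μ : ℝ) : EReal) := if_pos hcy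
        rw [hIx, hIy, ← EReal.coe_add, EReal.coe_le_coe_iff]
        have hptw : ∀ᵐ s ∂μ, (φ v).toReal + (inner ℝ c (y s - v) : ℝ) ≤ (φ (y s)).toReal := by
          filter_upwards [hcy.2] with s hs
          have h2 := hc (y s)
          rw [aux_coe hbot hv, ← EReal.coe_add, aux_coe hbot hs] at h2
          exact_mod_cast h2
        have hint1 : Integrable (fun s => (inner ℝ c (y s - v) : ℝ)) μ :=
          (hy.sub (integrable_const v)).const_inner c
        have hint2 : Integrable (fun s => (φ v).toReal + (inner ℝ c (y s - v) : ℝ)) μ :=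
          (integrable_const _).add hint1
        have hmono := integral_mono_ae hint2 hcy.1 hptw
        rw [integral_add (integrable_const _) hint1] at hmono
        exact hmono
      · have : Iphi μ φ y = ⊤ := if_neg hcy
        rw [this]; exact le_top
    have heq := H (fun _ => v) (integrable_const v) hIxne (fun _ => a) (fun _ => b)
      (hsg a ha) (hsg b hb)
    by_contra hab
    have h0 : μ univ = 0 := by
      have h1 : μ {s : S | ¬ ((fun _ => a) s = (fun _ => b) s)} = 0 := heq
      simp only [hab, not_false_iff] at h1
      simpa using h1
    exact hμ (Measure.measure_univ_eq_zero.1 h0)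
end

section
/- Let φ : E → ℝ ∪ {+∞} be proper, lower semicontinuous and convex with int dom φ ≠ ∅. Assume that I_φ is strictly convex on its domain (I_φ(λx + (1−λ)y) < λI_φ(x) + (1−λ)I_φ(y) whenever x, y ∈ dom I_φ, x ≠ y and 0 < λ < 1) and that ∂I_φ is single-valued (for every x ∈ L¹_E(S,μ) with I_φ(x) < +∞, any two subgradients in ∂I_φ(x) coincide μ-almost everywhere). Then φ is Legendre; concretely, ∂φ is single-valued (for every v ∈ E, ∂φ(v) contains at most one element) and φ is strictly convex on its domain. -/
open MeasureTheory Filter Topology Set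

/-- `Iphi` of a constant function with finite value. -/
lemma Iphi_const {S E : Type*} [MeasurableSpace S] (μ : Measure S) [IsFiniteMeasure μ]
    (φ : E → EReal) (v : E) (hv : φ v ≠ ⊤) :
    Iphi μ φ (fun _ => v) = (((μ Set.univ).toReal * (φ v).toReal : ℝ) : EReal) := by
  rw [Iphi, if_pos ⟨integrable_const _, Eventually.of_forall fun _ => hv⟩,
    integral_const, smul_eq_mul]
  rfl

/-- **A Legendre-type conclusion.** If `I_φ` is strictly convex on its domain and `∂I_φ` is
single-valued, then `φ` is Legendre: concretely `∂φ` is single-valued and `φ` is strictly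
convex on its domain. -/
theorem stmt_7 {S : Type*} [MeasurableSpace S] (μ : Measure S)
    [IsFiniteMeasure μ] [μ.IsComplete] (hμ : μ ≠ 0) (d : ℕ) (hd : 1 ≤ d)
    (φ : EuclideanSpace ℝ (Fin d) → EReal)
    (hproper : (∀ v, φ v ≠ ⊥) ∧ (∃ v, φ v ≠ ⊤))
    (hlsc : LowerSemicontinuous φ)
    (hconv : ∀ u v : EuclideanSpace ℝ (Fin d), ∀ t : ℝ, 0 ≤ t → t ≤ 1 →
      φ (t • u + (1 - t) • v) ≤ (t : EReal) * φ u + ((1 - t : ℝ) : EReal) * φ v)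
    (hint : (interior {v : EuclideanSpace ℝ (Fin d) | φ v ≠ ⊤}).Nonempty)
    (hIstrict : ∀ x y : S → EuclideanSpace ℝ (Fin d), Integrable x μ → Integrable y μ →
      Iphi μ φ x ≠ ⊤ → Iphi μ φ y ≠ ⊤ → ¬ (x =ᵐ[μ] y) →
      ∀ t : ℝ, 0 < t → t < 1 →
        Iphi μ φ (fun s => t • x s + (1 - t) • y s) <
          (t : EReal) * Iphi μ φ x + ((1 - t : ℝ) : EReal) * Iphi μ φ y)
    (hIsingle : ∀ x : S → EuclideanSpace ℝ (Fin d), Integrable x μ → Iphi μ φ x ≠ ⊤ →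
      ∀ xs ys : S → EuclideanSpace ℝ (Fin d),
        IsSubgradIphi μ φ x xs → IsSubgradIphi μ φ x ys → xs =ᵐ[μ] ys) :
    (∀ v : EuclideanSpace ℝ (Fin d), ∀ a ∈ subdiff φ v, ∀ b ∈ subdiff φ v, a = b) ∧
    (∀ u v : EuclideanSpace ℝ (Fin d), φ u ≠ ⊤ → φ v ≠ ⊤ → u ≠ v →
      ∀ t : ℝ, 0 < t → t < 1 →
        φ (t • u + (1 - t) • v) < (t : EReal) * φ u + ((1 - t : ℝ) : EReal) * φ v) := by
  have hμu : μ Set.univ ≠ 0 := by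
    simpa [Measure.measure_univ_eq_zero] using hμ
  set c : ℝ := (μ Set.univ).toReal with hc
  have hcpos : 0 < c := ENNReal.toReal_pos hμu (measure_ne_top μ _)
  have hne : (ae μ).NeBot := ae_neBot.2 hμ
  constructor
  · -- single-valuedness of ∂φ
    intro v a ha b hb
    have hv : φ v ≠ ⊤ := by
      intro hvt
      obtain ⟨w, hw⟩ := hproper.2
      have h1 := ha w
      rw [hvt, EReal.top_add_coe] at h1
      exact hw (top_le_iff.1 h1)
    have key : ∀ p ∈ subdiff φ v, IsSubgradIphi μ φ (fun _ => v) (fun _ => p) := by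
      intro p hp
      refine ⟨memLp_const _, fun y hy => ?_⟩
      by_cases hyt : Iphi μ φ y = ⊤
      · rw [hyt]; exact le_top
      have hcond : Integrable (fun s => (φ (y s)).toReal) μ ∧ ∀ᵐ s ∂μ, φ (y s) ≠ ⊤ := by
        by_contra h
        rw [Iphi, if_neg h] at hyt
        exact hyt rfl
      obtain ⟨hy1, hy2⟩ := hcond
      have hinner : Integrable (fun s => (inner ℝ p (y s - v) : ℝ)) μ := by
        have hsub : Integrable (fun s => y s - v) μ := hy.sub (integrable_const v)
        exact (innerSL ℝ p).integrable_comp hsub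
      have hptwise : ∀ᵐ s ∂μ, (φ v).toReal + (inner ℝ p (y s - v) : ℝ) ≤ (φ (y s)).toReal := by
        filter_upwards [hy2] with s hs
        have h1 := hp (y s)
        rw [← EReal.coe_toReal hv (hproper.1 v), ← EReal.coe_toReal hs (hproper.1 (y s)),
          ← EReal.coe_add] at h1
        exact_mod_cast h1
      have hle : c * (φ v).toReal + ∫ s, (inner ℝ p (y s - v) : ℝ) ∂μ
          ≤ ∫ s, (φ (y s)).toReal ∂μ := by
        have heq : c * (φ v).toReal + ∫ s, (inner ℝ p (y s - v) : ℝ) ∂μ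
            = ∫ s, ((φ v).toReal + (inner ℝ p (y s - v) : ℝ)) ∂μ := by
          rw [integral_add (integrable_const _) hinner, integral_const, smul_eq_mul]
          rfl
        rw [heq]
        exact integral_mono_ae ((integrable_const _).add hinner) hy1 hptwise
      show Iphi μ φ (fun _ => v) + ((∫ s, (inner ℝ p (y s - v) : ℝ) ∂μ : ℝ) : EReal) ≤ Iphi μ φ y
      rw [Iphi_const μ φ v hv, Iphi, if_pos ⟨hy1, hy2⟩, ← EReal.coe_add, EReal.coe_le_coe_iff]
      exact hle
    have hI : Iphi μ φ (fun _ => v) ≠ ⊤ := by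
      rw [Iphi_const μ φ v hv]; exact EReal.coe_ne_top _
    have hab := hIsingle _ (integrable_const v) hI _ _ (key a ha) (key b hb)
    obtain ⟨s, hs⟩ := hab.exists
    exact hs
  · -- strict convexity of φ
    intro u v hu hv huv t ht0 ht1
    have hxy : ¬ ((fun _ : S => u) =ᵐ[μ] (fun _ => v)) := by
      intro h
      obtain ⟨s, hs⟩ := h.exists
      exact huv hs
    have hIu : Iphi μ φ (fun _ => u) ≠ ⊤ := by
      rw [Iphi_const μ φ u hu]; exact EReal.coe_ne_top _
    have hIv : Iphi μ φ (fun _ => v) ≠ ⊤ := by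
      rw [Iphi_const μ φ v hv]; exact EReal.coe_ne_top _
    have hcombo : φ (t • u + (1 - t) • v) ≠ ⊤ := by
      intro h
      have h2 := hconv u v t ht0.le ht1.le
      rw [h, ← EReal.coe_toReal hu (hproper.1 u), ← EReal.coe_toReal hv (hproper.1 v),
        ← EReal.coe_mul, ← EReal.coe_mul, ← EReal.coe_add] at h2
      exact EReal.coe_ne_top _ (top_le_iff.1 h2)
    have hstrict := hIstrict _ _ (integrable_const u) (integrable_const v) hIu hIv hxy t ht0 ht1
    have e : Iphi μ φ (fun s => t • (fun _ : S => u) s + (1 - t) • (fun _ : S => v) s)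
        = ((c * (φ (t • u + (1 - t) • v)).toReal : ℝ) : EReal) :=
      Iphi_const μ φ (t • u + (1 - t) • v) hcombo
    rw [e, Iphi_const μ φ u hu, Iphi_const μ φ v hv, ← EReal.coe_mul, ← EReal.coe_mul,
      ← EReal.coe_add, EReal.coe_lt_coe_iff] at hstrict
    rw [← EReal.coe_toReal hu (hproper.1 u), ← EReal.coe_toReal hv (hproper.1 v),
      ← EReal.coe_toReal hcombo (hproper.1 _), ← EReal.coe_mul, ← EReal.coe_mul,
      ← EReal.coe_add, EReal.coe_lt_coe_iff]
    nlinarith [hstrict, hcpos]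
end

section
/- Let φ : ℝ → ℝ ∪ {+∞} be proper, lower semicontinuous and convex with int dom φ ≠ ∅. Then φ is Legendre — equivalently, in this one-dimensional setting with int dom φ ≠ ∅: ∂φ is single-valued (for every v ∈ ℝ, ∂φ(v) contains at most one element) and φ is strictly convex on its domain — if and only if I_φ is strictly convex on its domain (I_φ(λx + (1−λ)y) < λI_φ(x) + (1−λ)I_φ(y) whenever x, y ∈ dom I_φ, x ≠ y and 0 < λ < 1) and ∂I_φ is single-valued (for every x ∈ L¹_ℝ(S,μ) with I_φ(x) < +∞, any two subgradients in ∂I_φ(x) coincide μ-almost everywhere). -/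
open MeasureTheory Filter Topology Set

/-- The convex subdifferential of `φ : ℝ → ℝ ∪ {+∞}` at `v`. -/
def subdiffR (φ : ℝ → EReal) (v : ℝ) : Set ℝ :=
  {vs | ∀ w, φ v + ((vs * (w - v) : ℝ) : EReal) ≤ φ w}

/-- `xs ∈ L∞_ℝ(S,μ)` is a subgradient of `I_φ` at `x`. -/
def IsSubgradIphiR {S : Type*} [MeasurableSpace S] (μ : Measure S)
    (φ : ℝ → EReal) (x xs : S → ℝ) : Prop :=
  MemLp xs ⊤ μ ∧
    ∀ y : S → ℝ, Integrable y μ →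
      Iphi μ φ x + ((∫ s, xs s * (y s - x s) ∂μ : ℝ) : EReal) ≤ Iphi μ φ y

private lemma ecomb_coe (x y : EReal) (hxt : x ≠ ⊤) (hxb : x ≠ ⊥) (hyt : y ≠ ⊤) (hyb : y ≠ ⊥) (s t : ℝ) :
    (s : EReal) * x + (t : EReal) * y = ((s * x.toReal + t * y.toReal : ℝ) : EReal) := by
  lift x to ℝ using ⟨hxt, hxb⟩
  lift y to ℝ using ⟨hyt, hyb⟩
  simp [← EReal.coe_mul, ← EReal.coe_add]

private lemma dom_convex (φ : ℝ → EReal) (hbot : ∀ v, φ v ≠ ⊥)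
    (hconv : ∀ u v : ℝ, ∀ t : ℝ, 0 ≤ t → t ≤ 1 →
      φ (t * u + (1 - t) * v) ≤ (t : EReal) * φ u + ((1 - t : ℝ) : EReal) * φ v) :
    Convex ℝ {v : ℝ | φ v ≠ ⊤} := by
  intro u hu v hv a b ha hb hab
  have hb' : b = 1 - a := by linarith
  have := hconv u v a ha (by linarith)
  rw [ecomb_coe _ _ hu (hbot u) hv (hbot v)] at this
  simp only [smul_eq_mul, mem_setOf_eq, hb']
  exact fun h => (EReal.coe_lt_top _).not_ge (h ▸ this)

private lemma f_convexOn (φ : ℝ → EReal) (hbot : ∀ v, φ v ≠ ⊥)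
    (hconv : ∀ u v : ℝ, ∀ t : ℝ, 0 ≤ t → t ≤ 1 →
      φ (t * u + (1 - t) * v) ≤ (t : EReal) * φ u + ((1 - t : ℝ) : EReal) * φ v) :
    ConvexOn ℝ {v : ℝ | φ v ≠ ⊤} (fun v => (φ v).toReal) := by
  refine ⟨dom_convex φ hbot hconv, ?_⟩
  intro u hu v hv a b ha hb hab
  have hb' : b = 1 - a := by linarith
  subst hb'
  have h := hconv u v a ha (by linarith)
  rw [ecomb_coe _ _ hu (hbot u) hv (hbot v)] at h
  have hmem : φ (a * u + (1 - a) * v) ≠ ⊤ := fun hh => (EReal.coe_lt_top _).not_ge (hh ▸ h)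
  simp only [smul_eq_mul]
  rw [← EReal.coe_le_coe_iff, EReal.coe_toReal hmem (hbot _)]
  exact h
private lemma exists_affine_minorant (φ : ℝ → EReal) (hbot : ∀ v, φ v ≠ ⊥)
    (hf : ConvexOn ℝ {v : ℝ | φ v ≠ ⊤} (fun v => (φ v).toReal))
    (hint : (interior {v : ℝ | φ v ≠ ⊤}).Nonempty) :
    ∃ α β : ℝ, ∀ w : ℝ, ((α + β * w : ℝ) : EReal) ≤ φ w := by
  classical
  set D := {v : ℝ | φ v ≠ ⊤} with hD
  set f : ℝ → ℝ := fun v => (φ v).toReal with hfdef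
  obtain ⟨v0, hv0⟩ := hint
  obtain ⟨ε, εpos, hball⟩ := Metric.mem_nhds_iff.1 (mem_interior_iff_mem_nhds.1 hv0)
  have hsub : Ioo (v0 - ε/2) (v0 + ε/2) ⊆ D := fun z hz => hball (by
    simp only [Metric.mem_ball, Real.dist_eq]
    rw [abs_lt]; constructor <;> [linarith [hz.1]; linarith [hz.2]])
  have hv0D : v0 ∈ D := hsub ⟨by linarith, by linarith⟩
  set u0 : ℝ := v0 - ε/4 with hu0
  have hu0D : u0 ∈ D := hsub ⟨by simp [hu0]; linarith, by simp [hu0]; linarith⟩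
  set T : Set ℝ := (fun w => (f w - f v0)/(w - v0)) '' Ioo v0 (v0 + ε/2) with hT
  have hTne : T.Nonempty := ⟨_, ⟨v0 + ε/4, ⟨by linarith, by linarith⟩, rfl⟩⟩
  have hlb : ∀ u ∈ D, u < v0 → ∀ r ∈ T, (f u - f v0)/(u - v0) ≤ r := by
    rintro u hu huv r ⟨w', hw', rfl⟩
    have hw'D : w' ∈ D := hsub ⟨by linarith [hw'.1], hw'.2⟩
    exact hf.secant_mono hv0D hu hw'D (ne_of_lt huv) (ne_of_gt hw'.1) (by linarith [hw'.1])
  have hbdd : BddBelow T := ⟨_, fun r hr => hlb u0 hu0D (by simp [hu0]; linarith) r hr⟩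
  set β : ℝ := sInf T with hβ
  have key : ∀ w ∈ D, f v0 + β * (w - v0) ≤ f w := by
    intro w hw
    rcases lt_trichotomy w v0 with h | h | h
    · have : (f w - f v0)/(w - v0) ≤ β := le_csInf hTne (hlb w hw h)
      have h2 : w - v0 < 0 := by linarith
      nlinarith [(div_le_iff_of_neg h2).1 this]
    · simp [h]
    · set w' : ℝ := min w (v0 + ε/4) with hw'
      have hw'I : w' ∈ Ioo v0 (v0 + ε/2) := ⟨lt_min h (by linarith), by
        calc w' ≤ v0 + ε/4 := min_le_right _ _
        _ < v0 + ε/2 := by linarith⟩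
      have hw'D : w' ∈ D := hsub ⟨by linarith [hw'I.1], hw'I.2⟩
      have h1 : β ≤ (f w' - f v0)/(w' - v0) := csInf_le hbdd ⟨w', hw'I, rfl⟩
      have h2 : (f w' - f v0)/(w' - v0) ≤ (f w - f v0)/(w - v0) :=
        hf.secant_mono hv0D hw'D hw (ne_of_gt hw'I.1) (ne_of_gt h) (min_le_left _ _)
      have h3 : β ≤ (f w - f v0)/(w - v0) := h1.trans h2
      have h4 : 0 < w - v0 := by linarith
      nlinarith [(le_div_iff₀ h4).1 h3]
  refine ⟨f v0 - β * v0, β, fun w => ?_⟩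
  by_cases hw : φ w = ⊤
  · rw [hw]; exact le_top
  · rw [← EReal.coe_toReal hw (hbot w)]
    exact EReal.coe_le_coe_iff.2 (by have := key w hw; dsimp [f] at this ⊢; linarith)
private lemma subdiff_of_rat (φ : ℝ → EReal) (hbot : ∀ v, φ v ≠ ⊥)
    (hconv : ∀ u v : ℝ, ∀ t : ℝ, 0 ≤ t → t ≤ 1 →
      φ (t * u + (1 - t) * v) ≤ (t : EReal) * φ u + ((1 - t : ℝ) : EReal) * φ v)
    (hint : (interior {v : ℝ | φ v ≠ ⊤}).Nonempty)
    (r c : ℝ) (hr : φ r ≠ ⊤)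
    (hq : ∀ q : ℚ, φ r + ((c * ((q : ℝ) - r) : ℝ) : EReal) ≤ φ (q : ℝ)) :
    ∀ w : ℝ, φ r + ((c * (w - r) : ℝ) : EReal) ≤ φ w := by
  intro w
  by_cases hw : φ w = ⊤
  · rw [hw]; exact le_top
  obtain ⟨v0, hv0⟩ := hint
  obtain ⟨ε, εpos, hball⟩ := Metric.mem_nhds_iff.1 (mem_interior_iff_mem_nhds.1 hv0)
  have hv0D : φ v0 ≠ ⊤ := interior_subset hv0
  -- pick p ∈ dom with p ≠ w
  obtain ⟨p, hpD, hpw⟩ : ∃ p : ℝ, φ p ≠ ⊤ ∧ p ≠ w := by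
    by_cases h : v0 = w
    · refine ⟨v0 + ε/2, hball ?_, by intro hc; rw [h] at hc; linarith⟩
      simp only [Metric.mem_ball, Real.dist_eq, mem_setOf_eq]
      rw [show v0 + ε/2 - v0 = ε/2 by ring, abs_of_pos (by linarith)]; linarith
    · exact ⟨v0, hv0D, h⟩
  obtain ⟨K, hK⟩ : ∃ K : ℝ, K = |(φ p).toReal - (φ w).toReal| / |p - w| + |c| := ⟨_, rfl⟩
  have hKnn : 0 ≤ K := by rw [hK]; positivity
  have hpw' : 0 < |p - w| := abs_pos.2 (sub_ne_zero.2 hpw)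
  have main : ∀ δ : ℝ, 0 < δ → (φ r).toReal + c * (w - r) ≤ (φ w).toReal + δ * K := by
    intro δ hδ
    obtain ⟨q, ht0, ht1, hqd⟩ : ∃ q : ℚ, 0 < ((q:ℝ) - w)/(p - w) ∧ ((q:ℝ) - w)/(p - w) < 1 ∧
        |(q:ℝ) - w| < δ := by
      rcases lt_or_gt_of_ne hpw with hlt | hgt
      · -- p < w : rationals in (max p (w - δ), w)
        obtain ⟨q, hq1, hq2⟩ := exists_rat_btwn (show max p (w - δ) < w from
          max_lt hlt (by linarith))
        have h1 : p < (q:ℝ) := lt_of_le_of_lt (le_max_left _ _) hq1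
        have h2 : w - δ < (q:ℝ) := lt_of_le_of_lt (le_max_right _ _) hq1
        refine ⟨q, div_pos_iff.2 (Or.inr ⟨by linarith, by linarith⟩), ?_, ?_⟩
        · rw [div_lt_one_iff]; right; right; exact ⟨by linarith, by linarith⟩
        · rw [abs_lt]; constructor <;> linarith
      · -- w < p : rationals in (w, min p (w + δ))
        obtain ⟨q, hq1, hq2⟩ := exists_rat_btwn (show w < min p (w + δ) from
          lt_min hgt (by linarith))
        have h1 : (q:ℝ) < p := lt_of_lt_of_le hq2 (min_le_left _ _)
        have h2 : (q:ℝ) < w + δ := lt_of_lt_of_le hq2 (min_le_right _ _)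
        refine ⟨q, div_pos (by linarith) (by linarith), ?_, ?_⟩
        · rw [div_lt_one (by linarith)]; linarith
        · rw [abs_lt]; constructor <;> linarith
    set t : ℝ := ((q:ℝ) - w)/(p - w) with htdef
    have h5 : t * (p - w) = (q:ℝ) - w := div_mul_cancel₀ _ (sub_ne_zero.2 hpw)
    have habs : |t| = |(q:ℝ) - w| / |p - w| := by rw [htdef, abs_div]
    clear_value t
    have hqe : (q:ℝ) = t * p + (1 - t) * w := by linear_combination -h5
    have hcomb := hconv p w t (le_of_lt ht0) (le_of_lt ht1)
    rw [ecomb_coe _ _ hpD (hbot p) hw (hbot w), ← hqe] at hcomb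
    have hq' := (hq q).trans hcomb
    rw [← EReal.coe_toReal hr (hbot r), ← EReal.coe_add, EReal.coe_le_coe_iff] at hq'
    -- hq' : (φ r).toReal + c * ((q:ℝ) - r) ≤ t * (φ p).toReal + (1 - t) * (φ w).toReal
    have htb : t ≤ δ / |p - w| := by
      calc t ≤ |t| := le_abs_self t
      _ = |(q:ℝ) - w| / |p - w| := habs
      _ ≤ δ / |p - w| := by gcongr
    have e1 : c * (w - (q:ℝ)) ≤ |c| * δ := by
      calc c * (w - (q:ℝ)) ≤ |c * (w - (q:ℝ))| := le_abs_self _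
      _ = |c| * |w - (q:ℝ)| := abs_mul _ _
      _ ≤ |c| * δ := by
          have : |w - (q:ℝ)| ≤ δ := by rw [abs_sub_comm]; exact hqd.le
          exact mul_le_mul_of_nonneg_left this (abs_nonneg c)
    have e2 : t * ((φ p).toReal - (φ w).toReal) ≤ δ * (|(φ p).toReal - (φ w).toReal| / |p - w|) := by
      calc t * ((φ p).toReal - (φ w).toReal) ≤ t * |(φ p).toReal - (φ w).toReal| :=
            mul_le_mul_of_nonneg_left (le_abs_self _) ht0.le
      _ ≤ (δ / |p - w|) * |(φ p).toReal - (φ w).toReal| := mul_le_mul_of_nonneg_right htb (abs_nonneg _)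
      _ = δ * (|(φ p).toReal - (φ w).toReal| / |p - w|) := by ring
    have e3 : δ * K = δ * (|(φ p).toReal - (φ w).toReal| / |p - w|) + |c| * δ := by rw [hK]; ring
    have e4 : t * (φ p).toReal + (1 - t) * (φ w).toReal = (φ w).toReal + t * ((φ p).toReal - (φ w).toReal) := by ring
    have e5 : c * (w - r) = c * ((q:ℝ) - r) + c * (w - (q:ℝ)) := by ring
    linarith [hq', e1, e2, e3, e4, e5]
  have := le_of_forall_pos_le_add (a := (φ r).toReal + c * (w - r)) (b := (φ w).toReal) ?_
  · rw [← EReal.coe_toReal hr (hbot r), ← EReal.coe_toReal hw (hbot w), ← EReal.coe_add,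
      EReal.coe_le_coe_iff]
    exact this
  · intro ε' hε'
    have h1 := main (ε' / (K + 1)) (by positivity)
    have h2 : (ε' / (K + 1)) * K ≤ ε' := by
      rw [div_mul_eq_mul_div, div_le_iff₀ (by linarith)]
      nlinarith
    linarith
private lemma subgrad_rat_ae {S : Type*} [MeasurableSpace S] (μ : Measure S)
    [IsFiniteMeasure μ] (φ : ℝ → EReal)
    (hbot : ∀ v, φ v ≠ ⊥)
    (x xs : S → ℝ) (hx : Integrable x μ)
    (hcond : Integrable (fun s => (φ (x s)).toReal) μ ∧ ∀ᵐ s ∂μ, φ (x s) ≠ ⊤)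
    (hsub : IsSubgradIphiR μ φ x xs) :
    ∀ᵐ s ∂μ, ∀ q : ℚ, φ (x s) + ((xs s * ((q : ℝ) - x s) : ℝ) : EReal) ≤ φ (q : ℝ) := by
  classical
  rw [ae_all_iff]
  intro q
  by_cases hq : φ (q : ℝ) = ⊤
  · exact Eventually.of_forall (fun s => hq ▸ le_top)
  obtain ⟨hxsm, hineq⟩ := hsub
  have hfin : eLpNormEssSup xs μ < ⊤ := by
    have := hxsm.2; rwa [eLpNorm_exponent_top] at this
  have hbd : ∀ᵐ s ∂μ, ‖xs s‖ ≤ (eLpNormEssSup xs μ).toReal := by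
    filter_upwards [ae_le_eLpNormEssSup (f := xs) (μ := μ)] with s hs
    have := ENNReal.toReal_mono hfin.ne hs
    simpa using this
  have hxsmeas : AEStronglyMeasurable xs μ := hxsm.1
  -- integrability of the product
  have hprod : Integrable (fun s => xs s * ((q : ℝ) - x s)) μ :=
    Integrable.bdd_mul ((integrable_const _).sub hx) hxsmeas hbd
  have hIx : Iphi μ φ x = ((∫ s, (φ (x s)).toReal ∂μ : ℝ) : EReal) := by
    unfold Iphi; rw [if_pos hcond]
  set g : S → ℝ := fun s =>
    (φ (q : ℝ)).toReal - (φ (x s)).toReal - xs s * ((q : ℝ) - x s) with hg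
  have hgint : Integrable g μ := ((integrable_const _).sub hcond.1).sub hprod
  have hnn : 0 ≤ᵐ[μ] g := by
    apply ae_nonneg_of_forall_setIntegral_nonneg hgint
    intro A hA _
    set yA : S → ℝ := fun s => x s + A.indicator (fun s => (q : ℝ) - x s) s with hyA
    have hyA_mem : ∀ s, s ∈ A → yA s = (q : ℝ) := by
      intro s hs; simp only [hyA, indicator_of_mem hs]; ring
    have hyA_nmem : ∀ s, s ∉ A → yA s = x s := by
      intro s hs; simp only [hyA, indicator_of_notMem hs]; ring
    have hsint : Integrable (fun s => (φ (q : ℝ)).toReal - (φ (x s)).toReal) μ :=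
      (integrable_const _).sub hcond.1
    have hyint : Integrable yA μ :=
      hx.add (((integrable_const _).sub hx).indicator hA)
    have hfy : (fun s => (φ (yA s)).toReal) =
        fun s => (φ (x s)).toReal +
          A.indicator (fun s => (φ (q : ℝ)).toReal - (φ (x s)).toReal) s := by
      funext s
      by_cases hs : s ∈ A
      · rw [hyA_mem s hs, indicator_of_mem hs]; ring
      · rw [hyA_nmem s hs, indicator_of_notMem hs]; ring
    have hfyint : Integrable (fun s => (φ (yA s)).toReal) μ := by
      rw [hfy]
      exact hcond.1.add (((integrable_const _).sub hcond.1).indicator hA)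
    have hfytop : ∀ᵐ s ∂μ, φ (yA s) ≠ ⊤ := by
      filter_upwards [hcond.2] with s hs
      by_cases h : s ∈ A
      · rw [hyA_mem s h]; exact hq
      · rw [hyA_nmem s h]; exact hs
    have hIy : Iphi μ φ yA = ((∫ s, (φ (yA s)).toReal ∂μ : ℝ) : EReal) := by
      unfold Iphi; rw [if_pos ⟨hfyint, hfytop⟩]
    have key := hineq yA hyint
    rw [hIx, hIy, ← EReal.coe_add, EReal.coe_le_coe_iff] at key
    -- key : ∫ fx + ∫ xs * (yA - x) ≤ ∫ fyA
    have e1 : (fun s => xs s * (yA s - x s)) =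
        fun s => A.indicator (fun s => xs s * ((q : ℝ) - x s)) s := by
      funext s
      by_cases hs : s ∈ A
      · rw [hyA_mem s hs, indicator_of_mem hs]
      · rw [hyA_nmem s hs, indicator_of_notMem hs]; ring
    have e2 : ∫ s, xs s * (yA s - x s) ∂μ = ∫ s in A, xs s * ((q : ℝ) - x s) ∂μ := by
      rw [e1, integral_indicator hA]
    have e3 : ∫ s, (φ (yA s)).toReal ∂μ = (∫ s, (φ (x s)).toReal ∂μ) +
        ∫ s in A, ((φ (q : ℝ)).toReal - (φ (x s)).toReal) ∂μ := by
      rw [hfy, integral_add hcond.1 (hsint.indicator hA), integral_indicator hA]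
    rw [e2, e3] at key
    have e4 : ∫ s in A, (((φ (q : ℝ)).toReal - (φ (x s)).toReal) - xs s * ((q : ℝ) - x s)) ∂μ
        = (∫ s in A, ((φ (q : ℝ)).toReal - (φ (x s)).toReal) ∂μ)
        - ∫ s in A, xs s * ((q : ℝ) - x s) ∂μ :=
      integral_sub hsint.integrableOn hprod.integrableOn
    have e5 : ∫ s in A, g s ∂μ
        = ∫ s in A, (((φ (q : ℝ)).toReal - (φ (x s)).toReal) - xs s * ((q : ℝ) - x s)) ∂μ := rfl
    linarith [key, e4, e5]
  filter_upwards [hnn, hcond.2] with s h1 h2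
  rw [← EReal.coe_toReal h2 (hbot _), ← EReal.coe_add, ← EReal.coe_toReal hq (hbot _),
    EReal.coe_le_coe_iff]
  simp only [hg, Pi.zero_apply] at h1
  linarith
private lemma strict_Iphi {S : Type*} [MeasurableSpace S] (μ : Measure S)
    [IsFiniteMeasure μ] (φ : ℝ → EReal)
    (hbot : ∀ v, φ v ≠ ⊥) (hφm : Measurable φ)
    (hminor : ∃ α β : ℝ, ∀ w : ℝ, ((α + β * w : ℝ) : EReal) ≤ φ w)
    (hconv : ∀ u v : ℝ, ∀ t : ℝ, 0 ≤ t → t ≤ 1 →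
      φ (t * u + (1 - t) * v) ≤ (t : EReal) * φ u + ((1 - t : ℝ) : EReal) * φ v)
    (hstrict : ∀ u v : ℝ, φ u ≠ ⊤ → φ v ≠ ⊤ → u ≠ v → ∀ t : ℝ, 0 < t → t < 1 →
      φ (t * u + (1 - t) * v) < (t : EReal) * φ u + ((1 - t : ℝ) : EReal) * φ v)
    (x y : S → ℝ) (hx : Integrable x μ) (hy : Integrable y μ)
    (hcx : Integrable (fun s => (φ (x s)).toReal) μ ∧ ∀ᵐ s ∂μ, φ (x s) ≠ ⊤)
    (hcy : Integrable (fun s => (φ (y s)).toReal) μ ∧ ∀ᵐ s ∂μ, φ (y s) ≠ ⊤)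
    (hxy : ¬ (x =ᵐ[μ] y)) (t : ℝ) (ht0 : 0 < t) (ht1 : t < 1) :
    Iphi μ φ (fun s => t * x s + (1 - t) * y s) <
      (t : EReal) * Iphi μ φ x + ((1 - t : ℝ) : EReal) * Iphi μ φ y := by
  classical
  obtain ⟨α, β, hαβ⟩ := hminor
  set z : S → ℝ := fun s => t * x s + (1 - t) * y s with hz
  have hzint : Integrable z μ := (hx.const_mul t).add (hy.const_mul (1 - t))
  have hub : ∀ᵐ s ∂μ, φ (z s) ≤ ((t * (φ (x s)).toReal + (1 - t) * (φ (y s)).toReal : ℝ) : EReal) := by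
    filter_upwards [hcx.2, hcy.2] with s h1 h2
    have := hconv (x s) (y s) t ht0.le ht1.le
    rwa [ecomb_coe _ _ h1 (hbot _) h2 (hbot _)] at this
  have hztop : ∀ᵐ s ∂μ, φ (z s) ≠ ⊤ := by
    filter_upwards [hub] with s hs
    exact fun h => (EReal.coe_lt_top _).not_ge (h ▸ hs)
  have hubr : ∀ᵐ s ∂μ, (φ (z s)).toReal ≤ t * (φ (x s)).toReal + (1 - t) * (φ (y s)).toReal := by
    filter_upwards [hub, hztop] with s h1 h2
    rwa [← EReal.coe_toReal h2 (hbot _), EReal.coe_le_coe_iff] at h1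
  have hlb : ∀ᵐ s ∂μ, α + β * z s ≤ (φ (z s)).toReal := by
    filter_upwards [hztop] with s h2
    have := hαβ (z s)
    rwa [← EReal.coe_toReal h2 (hbot _), EReal.coe_le_coe_iff] at this
  have hmeas : AEStronglyMeasurable (fun s => (φ (z s)).toReal) μ :=
    ((measurable_ereal_toReal.comp hφm).comp_aemeasurable
      hzint.1.aemeasurable).aestronglyMeasurable
  have hcomb : Integrable (fun s => t * (φ (x s)).toReal + (1 - t) * (φ (y s)).toReal) μ :=
    (hcx.1.const_mul t).add (hcy.1.const_mul (1 - t))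
  have haff : Integrable (fun s => α + β * z s) μ :=
    (integrable_const α).add (hzint.const_mul β)
  have hgint : Integrable (fun s =>
      |t * (φ (x s)).toReal + (1 - t) * (φ (y s)).toReal| + |α + β * z s|) μ :=
    hcomb.abs.add haff.abs
  have hzcond : Integrable (fun s => (φ (z s)).toReal) μ := by
    refine Integrable.mono' hgint hmeas ?_
    filter_upwards [hlb, hubr] with s h1 h2
    rw [Real.norm_eq_abs, abs_le]
    constructor
    · nlinarith [neg_abs_le (α + β * z s), abs_nonneg (t * (φ (x s)).toReal + (1 - t) * (φ (y s)).toReal)]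
    · nlinarith [le_abs_self (t * (φ (x s)).toReal + (1 - t) * (φ (y s)).toReal), abs_nonneg (α + β * z s)]
  set d : S → ℝ := fun s => t * (φ (x s)).toReal + (1 - t) * (φ (y s)).toReal - (φ (z s)).toReal
    with hd
  have hdint : Integrable d μ := hcomb.sub hzcond
  have hdnn : 0 ≤ᵐ[μ] d := by
    filter_upwards [hubr] with s h1
    simp only [hd, Pi.zero_apply]; linarith
  have hpos : ∀ᵐ s ∂μ, x s ≠ y s → 0 < d s := by
    filter_upwards [hcx.2, hcy.2, hztop] with s h1 h2 h3 hne
    have := hstrict (x s) (y s) h1 h2 hne t ht0 ht1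
    rw [ecomb_coe _ _ h1 (hbot _) h2 (hbot _), ← EReal.coe_toReal h3 (hbot _),
      EReal.coe_lt_coe_iff] at this
    simp only [hd]; linarith
  have hne0 : μ {s | x s ≠ y s} ≠ 0 := by
    exact fun h => hxy (ae_iff.mpr h)
  have hsupp : 0 < μ (Function.support d) := by
    have hle : μ {s | x s ≠ y s} ≤ μ (Function.support d) := by
      apply measure_mono_ae
      filter_upwards [hpos] with s hs hmem
      exact (hs hmem).ne'
    exact lt_of_lt_of_le (pos_iff_ne_zero.2 hne0) hle
  have hipos : 0 < ∫ s, d s ∂μ :=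
    (integral_pos_iff_support_of_nonneg_ae hdnn hdint).2 hsupp
  have hsplit : ∫ s, d s ∂μ = (t * ∫ s, (φ (x s)).toReal ∂μ)
      + ((1 - t) * ∫ s, (φ (y s)).toReal ∂μ) - ∫ s, (φ (z s)).toReal ∂μ := by
    rw [hd]
    rw [integral_sub hcomb hzcond, integral_add (hcx.1.const_mul t) (hcy.1.const_mul (1 - t)),
      integral_const_mul, integral_const_mul]
  have hIx : Iphi μ φ x = ((∫ s, (φ (x s)).toReal ∂μ : ℝ) : EReal) := by
    unfold Iphi; rw [if_pos hcx]
  have hIy : Iphi μ φ y = ((∫ s, (φ (y s)).toReal ∂μ : ℝ) : EReal) := by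
    unfold Iphi; rw [if_pos hcy]
  have hIz : Iphi μ φ z = ((∫ s, (φ (z s)).toReal ∂μ : ℝ) : EReal) := by
    unfold Iphi; rw [if_pos ⟨hzcond, hztop⟩]
  show Iphi μ φ z < _
  rw [hIx, hIy, hIz, ← EReal.coe_mul, ← EReal.coe_mul, ← EReal.coe_add, EReal.coe_lt_coe_iff]
  linarith
private lemma cond_of_ne_top {S : Type*} [MeasurableSpace S] (μ : Measure S)
    (φ : ℝ → EReal) (x : S → ℝ) (h : Iphi μ φ x ≠ ⊤) :
    Integrable (fun s => (φ (x s)).toReal) μ ∧ ∀ᵐ s ∂μ, φ (x s) ≠ ⊤ := by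
  by_contra hc
  exact h (by unfold Iphi; rw [if_neg hc])

private lemma Iphi_const_ne_top {S : Type*} [MeasurableSpace S] (μ : Measure S)
    [IsFiniteMeasure μ] (φ : ℝ → EReal) (c : ℝ) (hc : φ c ≠ ⊤) :
    Iphi μ φ (fun _ => c) = ((((μ univ).toReal * (φ c).toReal : ℝ)) : EReal) := by
  have hcond : Integrable (fun s : S => (φ c).toReal) μ ∧ ∀ᵐ s ∂μ, φ c ≠ ⊤ :=
    ⟨integrable_const _, Eventually.of_forall fun _ => hc⟩
  unfold Iphi
  rw [if_pos hcond, integral_const, smul_eq_mul, measureReal_def]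

private lemma subdiff_finite (φ : ℝ → EReal) (hw : ∃ w, φ w ≠ ⊤) (v a : ℝ)
    (ha : a ∈ subdiffR φ v) : φ v ≠ ⊤ := by
  intro h
  obtain ⟨w, hwt⟩ := hw
  have := ha w
  rw [h, EReal.top_add_coe] at this
  exact hwt (top_le_iff.1 this)

private lemma const_subgrad {S : Type*} [MeasurableSpace S] (μ : Measure S)
    [IsFiniteMeasure μ] (φ : ℝ → EReal) (hbot : ∀ v, φ v ≠ ⊥)
    (v a : ℝ) (hv : φ v ≠ ⊤) (ha : a ∈ subdiffR φ v) :
    IsSubgradIphiR μ φ (fun _ => v) (fun _ => a) := by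
  classical
  refine ⟨memLp_const a, fun y hyint => ?_⟩
  by_cases hcy : Integrable (fun s => (φ (y s)).toReal) μ ∧ ∀ᵐ s ∂μ, φ (y s) ≠ ⊤
  · have hIy : Iphi μ φ y = ((∫ s, (φ (y s)).toReal ∂μ : ℝ) : EReal) := by
      unfold Iphi; rw [if_pos hcy]
    have hcx : Integrable (fun s : S => (φ v).toReal) μ ∧ ∀ᵐ s ∂μ, φ v ≠ ⊤ :=
      ⟨integrable_const _, Eventually.of_forall fun _ => hv⟩
    have hIx : Iphi μ φ (fun _ : S => v) = ((∫ _ : S, (φ v).toReal ∂μ : ℝ) : EReal) := by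
      unfold Iphi; rw [if_pos hcx]
    rw [hIx, hIy, ← EReal.coe_add, EReal.coe_le_coe_iff]
    have hlint : Integrable (fun s => (φ v).toReal + a * (y s - v)) μ :=
      (integrable_const _).add ((hyint.sub (integrable_const _)).const_mul a)
    have hmono : ∫ s, ((φ v).toReal + a * (y s - v)) ∂μ ≤ ∫ s, (φ (y s)).toReal ∂μ := by
      refine integral_mono_ae hlint hcy.1 ?_
      filter_upwards [hcy.2] with s hs
      have := ha (y s)
      rwa [← EReal.coe_toReal hv (hbot v), ← EReal.coe_add,
        ← EReal.coe_toReal hs (hbot _), EReal.coe_le_coe_iff] at this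
    have hsplit : ∫ s, ((φ v).toReal + a * (y s - v)) ∂μ
        = (∫ _ : S, (φ v).toReal ∂μ) + ∫ s, a * (y s - v) ∂μ :=
      integral_add (integrable_const _) ((hyint.sub (integrable_const _)).const_mul a)
    linarith [hmono, hsplit]
  · have : Iphi μ φ y = ⊤ := by unfold Iphi; rw [if_neg hcy]
    rw [this]
    exact le_top

/-- **One-dimensional characterization of Legendre integrands.** For a proper lower
semicontinuous convex `φ : ℝ → ℝ ∪ {+∞}` with `int dom φ ≠ ∅`, `φ` is Legendre (equivalently:
`∂φ` is single-valued and `φ` is strictly convex on its domain) if and only if `I_φ` is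
strictly convex on its domain and `∂I_φ` is single-valued. -/
theorem stmt_8 {S : Type*} [MeasurableSpace S] (μ : Measure S)
    [IsFiniteMeasure μ] [μ.IsComplete] (hμ : μ ≠ 0)
    (φ : ℝ → EReal)
    (hproper : (∀ v, φ v ≠ ⊥) ∧ (∃ v, φ v ≠ ⊤))
    (hlsc : LowerSemicontinuous φ)
    (hconv : ∀ u v : ℝ, ∀ t : ℝ, 0 ≤ t → t ≤ 1 →
      φ (t * u + (1 - t) * v) ≤ (t : EReal) * φ u + ((1 - t : ℝ) : EReal) * φ v)
    (hint : (interior {v : ℝ | φ v ≠ ⊤}).Nonempty) :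
    ((∀ v : ℝ, ∀ a ∈ subdiffR φ v, ∀ b ∈ subdiffR φ v, a = b) ∧
      (∀ u v : ℝ, φ u ≠ ⊤ → φ v ≠ ⊤ → u ≠ v → ∀ t : ℝ, 0 < t → t < 1 →
        φ (t * u + (1 - t) * v) < (t : EReal) * φ u + ((1 - t : ℝ) : EReal) * φ v))
      ↔
    ((∀ x y : S → ℝ, Integrable x μ → Integrable y μ →
        Iphi μ φ x ≠ ⊤ → Iphi μ φ y ≠ ⊤ → ¬ (x =ᵐ[μ] y) →
        ∀ t : ℝ, 0 < t → t < 1 →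
          Iphi μ φ (fun s => t * x s + (1 - t) * y s) <
            (t : EReal) * Iphi μ φ x + ((1 - t : ℝ) : EReal) * Iphi μ φ y) ∧
      (∀ x : S → ℝ, Integrable x μ → Iphi μ φ x ≠ ⊤ →
        ∀ xs ys : S → ℝ, IsSubgradIphiR μ φ x xs → IsSubgradIphiR μ φ x ys → xs =ᵐ[μ] ys)) := by
  constructor
  · rintro ⟨hsingle, hstrict⟩
    have hbot := hproper.1
    have hφm : Measurable φ := hlsc.measurable
    have hfconv := f_convexOn φ hbot hconv
    have hminor := exists_affine_minorant φ hbot hfconv hint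
    constructor
    · intro x y hx hy hIx hIy hxy t ht0 ht1
      exact strict_Iphi μ φ hbot hφm hminor hconv hstrict x y hx hy
        (cond_of_ne_top μ φ x hIx) (cond_of_ne_top μ φ y hIy) hxy t ht0 ht1
    · intro x hx hIx xs ys hxs hys
      have hcond := cond_of_ne_top μ φ x hIx
      have h1 := subgrad_rat_ae μ φ hbot x xs hx hcond hxs
      have h2 := subgrad_rat_ae μ φ hbot x ys hx hcond hys
      filter_upwards [h1, h2, hcond.2] with s hs1 hs2 hs3
      have m1 : xs s ∈ subdiffR φ (x s) :=
        subdiff_of_rat φ hbot hconv hint (x s) (xs s) hs3 hs1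
      have m2 : ys s ∈ subdiffR φ (x s) :=
        subdiff_of_rat φ hbot hconv hint (x s) (ys s) hs3 hs2
      exact hsingle (x s) (xs s) m1 (ys s) m2
  · rintro ⟨hI1, hI2⟩
    have hbot := hproper.1
    have hne : (MeasureTheory.ae μ).NeBot := ae_neBot.2 hμ
    have huniv : μ univ ≠ 0 := fun h => hμ (Measure.measure_univ_eq_zero.1 h)
    constructor
    · intro v a ha b hb
      have hv : φ v ≠ ⊤ := subdiff_finite φ hproper.2 v a ha
      have hIx : Iphi μ φ (fun _ : S => v) ≠ ⊤ := by
        rw [Iphi_const_ne_top μ φ v hv]; exact EReal.coe_ne_top _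
      have hab := hI2 (fun _ => v) (integrable_const v) hIx (fun _ => a) (fun _ => b)
        (const_subgrad μ φ hbot v a hv ha) (const_subgrad μ φ hbot v b hv hb)
      obtain ⟨s, hs⟩ := hab.exists
      exact hs
    · intro u v hu hv huv t ht0 ht1
      have hxy : ¬ ((fun _ : S => u) =ᵐ[μ] (fun _ => v)) := by
        intro h
        obtain ⟨s, hs⟩ := h.exists
        exact huv hs
      have hIu : Iphi μ φ (fun _ : S => u) ≠ ⊤ := by
        rw [Iphi_const_ne_top μ φ u hu]; exact EReal.coe_ne_top _
      have hIv : Iphi μ φ (fun _ : S => v) ≠ ⊤ := by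
        rw [Iphi_const_ne_top μ φ v hv]; exact EReal.coe_ne_top _
      have key := hI1 (fun _ => u) (fun _ => v) (integrable_const u) (integrable_const v)
        hIu hIv hxy t ht0 ht1
      set c : ℝ := t * u + (1 - t) * v with hc
      have hkeyc : Iphi μ φ (fun _ : S => c) <
          (t : EReal) * Iphi μ φ (fun _ : S => u) + ((1 - t : ℝ) : EReal) * Iphi μ φ (fun _ : S => v) := key
      have hct : φ c ≠ ⊤ := by
        intro h
        have hcond' : ¬ (Integrable (fun s : S => (φ c).toReal) μ ∧ ∀ᵐ s ∂μ, φ c ≠ ⊤) := by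
          rintro ⟨-, hae⟩
          obtain ⟨s, hs⟩ := hae.exists
          exact hs h
        have htop : Iphi μ φ (fun _ : S => c) = ⊤ := by
          unfold Iphi; rw [if_neg hcond']
        rw [htop] at hkeyc
        exact (not_top_lt hkeyc)
      rw [Iphi_const_ne_top μ φ c hct, Iphi_const_ne_top μ φ u hu, Iphi_const_ne_top μ φ v hv,
        ← EReal.coe_mul, ← EReal.coe_mul, ← EReal.coe_add, EReal.coe_lt_coe_iff] at hkeyc
      set m : ℝ := (μ univ).toReal with hm
      have hmpos : 0 < m := ENNReal.toReal_pos huniv (measure_ne_top μ univ)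
      have key2 : m * (φ c).toReal < m * (t * (φ u).toReal + (1 - t) * (φ v).toReal) := by
        calc m * (φ c).toReal < t * (m * (φ u).toReal) + (1 - t) * (m * (φ v).toReal) := hkeyc
        _ = m * (t * (φ u).toReal + (1 - t) * (φ v).toReal) := by ring
      have key3 : (φ c).toReal < t * (φ u).toReal + (1 - t) * (φ v).toReal :=
        (mul_lt_mul_iff_right₀ hmpos).1 key2
      rw [ecomb_coe _ _ hu (hbot u) hv (hbot v), ← EReal.coe_toReal hct (hbot c),
        EReal.coe_lt_coe_iff]
      exact key3
end

section
/- Let φ : E → ℝ ∪ {+∞} be proper, lower semicontinuous and convex, and let x ∈ L¹_E(S,μ). Assume there exists a bounded closed set D ⊆ int dom φ such that x(s) ∈ D for μ-almost every s ∈ S. Then there exists x* ∈ L∞_E(S,μ) such that x*(s) ∈ ∂φ(x(s)) for μ-almost every s ∈ S; in particular ∂I_φ(x) ≠ ∅. -/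
open MeasureTheory Filter Topology Set Bornology

section Aux
variable {d : ℕ}

lemma phi_eq_coe (φ : EuclideanSpace ℝ (Fin d) → EReal) (hbot : ∀ v, φ v ≠ ⊥)
    {v : EuclideanSpace ℝ (Fin d)} (hv : φ v ≠ ⊤) : φ v = ((φ v).toReal : ℝ) := by
  rw [EReal.coe_toReal hv (hbot v)]

lemma exists_min_norm {K : Set (EuclideanSpace ℝ (Fin d))} (hne : K.Nonempty)
    (hcl : IsClosed K) (hcvx : Convex ℝ K) :
    ∃ g ∈ K, (∀ g' ∈ K, ‖g‖ ≤ ‖g'‖) ∧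
      (∀ g'' ∈ K, (∀ g' ∈ K, ‖g''‖ ≤ ‖g'‖) → g'' = g) := by
  obtain ⟨g, hgK, hg⟩ := exists_norm_eq_iInf_of_complete_convex hne
    (hcl.isComplete) hcvx (0 : EuclideanSpace ℝ (Fin d))
  have hbdd : BddBelow (range fun w : K => ‖(0 : EuclideanSpace ℝ (Fin d)) - (w : _)‖) := by
    refine ⟨0, ?_⟩
    rintro r ⟨w, rfl⟩
    exact norm_nonneg _
  have hmin : ∀ g' ∈ K, ‖g‖ ≤ ‖g'‖ := by
    intro g' hg'
    have h1 : ‖(0 : EuclideanSpace ℝ (Fin d)) - g‖ ≤ ‖(0:EuclideanSpace ℝ (Fin d)) - g'‖ := by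
      rw [hg]
      exact ciInf_le hbdd ⟨g', hg'⟩
    simpa using h1
  refine ⟨g, hgK, hmin, ?_⟩
  intro g'' hg''K hmin''
  have heq : ‖g''‖ = ‖g‖ := le_antisymm (hmin'' g hgK) (hmin g'' hg''K)
  have hz : (2⁻¹ : ℝ) • g + (2⁻¹ : ℝ) • g'' ∈ K :=
    hcvx hgK hg''K (by norm_num) (by norm_num) (by norm_num)
  have hzn : ‖(2⁻¹ : ℝ) • g + (2⁻¹ : ℝ) • g''‖ = 2⁻¹ * ‖g + g''‖ := by
    rw [← smul_add, norm_smul]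
    simp
  have h1 : ‖g‖ ≤ 2⁻¹ * ‖g + g''‖ := by
    rw [← hzn]; exact hmin _ hz
  have hpar := parallelogram_law_with_norm ℝ g g''
  have h2 : ‖g - g''‖ ^ 2 ≤ 0 := by nlinarith [norm_nonneg (g + g''), norm_nonneg g]
  have h3 : ‖g - g''‖ = 0 := by nlinarith [norm_nonneg (g - g''), sq_nonneg ‖g - g''‖]
  rw [norm_sub_eq_zero_iff] at h3
  exact h3.symm

lemma isClosed_graphP {f : EuclideanSpace ℝ (Fin d) → ℝ} {U : Set (EuclideanSpace ℝ (Fin d))}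
    (hU : IsOpen U) (hcont : ContinuousOn f U)
    {D : Set (EuclideanSpace ℝ (Fin d))} (hD : IsClosed D) (hDU : D ⊆ U) :
    IsClosed {p : EuclideanSpace ℝ (Fin d) × EuclideanSpace ℝ (Fin d) |
      p.1 ∈ D ∧ ∀ w ∈ U, f p.1 + (inner ℝ p.2 (w - p.1) : ℝ) ≤ f w} := by
  have hDu : IsClosed (D ×ˢ (univ : Set (EuclideanSpace ℝ (Fin d)))) :=
    hD.prod isClosed_univ
  have heq : {p : EuclideanSpace ℝ (Fin d) × EuclideanSpace ℝ (Fin d) |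
      p.1 ∈ D ∧ ∀ w ∈ U, f p.1 + (inner ℝ p.2 (w - p.1) : ℝ) ≤ f w} =
      (D ×ˢ univ) ∩ ⋂ w ∈ U, ((D ×ˢ univ) ∩
        (fun p : EuclideanSpace ℝ (Fin d) × EuclideanSpace ℝ (Fin d) =>
          f w - f p.1 - (inner ℝ p.2 (w - p.1) : ℝ)) ⁻¹' (Ici 0)) := by
    ext p
    simp only [mem_setOf_eq, mem_inter_iff, mem_prod, mem_univ, and_true, mem_iInter,
      mem_preimage, mem_Ici]
    constructor
    · rintro ⟨h1, h2⟩
      exact ⟨h1, fun w hw => ⟨h1, by linarith [h2 w hw]⟩⟩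
    · rintro ⟨h1, h2⟩
      exact ⟨h1, fun w hw => by linarith [(h2 w hw).2]⟩
  rw [heq]
  refine hDu.inter (isClosed_biInter fun w hw => ?_)
  refine ContinuousOn.preimage_isClosed_of_isClosed ?_ hDu isClosed_Ici
  have h1 : ContinuousOn (fun p : EuclideanSpace ℝ (Fin d) × EuclideanSpace ℝ (Fin d) =>
      f p.1) (D ×ˢ univ) := by
    refine (hcont.comp continuous_fst.continuousOn ?_)
    rintro ⟨p1, p2⟩ ⟨hp1, -⟩
    exact hDU hp1
  have h2 : Continuous (fun p : EuclideanSpace ℝ (Fin d) × EuclideanSpace ℝ (Fin d) =>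
      (inner ℝ p.2 (w - p.1) : ℝ)) := by
    exact continuous_snd.inner (continuous_const.sub continuous_fst)
  exact (continuousOn_const.sub h1).sub h2.continuousOn

lemma isClosed_G2 {D B C : Set (EuclideanSpace ℝ (Fin d))} (hB : IsCompact B)
    {G : Set (EuclideanSpace ℝ (Fin d) × EuclideanSpace ℝ (Fin d))} (hG : IsClosed G)
    (hGsub : G ⊆ D ×ˢ B) (hC : IsClosed C) :
    IsClosed {q : EuclideanSpace ℝ (Fin d) × ℝ | ∃ g, (q.1, g) ∈ G ∧ g ∈ C ∧ ‖g‖ ≤ q.2} := by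
  refine IsSeqClosed.isClosed ?_
  intro qn q hqn hq
  choose g hg1 hg2 hg3 using hqn
  obtain ⟨g0, hg0B, ψ, hψmono, hψt⟩ := hB.tendsto_subseq (fun n => (hGsub (hg1 n)).2)
  have hqψ : Tendsto (fun n => qn (ψ n)) atTop (𝓝 q) := hq.comp hψmono.tendsto_atTop
  have hq1 : Tendsto (fun n => (qn (ψ n)).1) atTop (𝓝 q.1) :=
    (continuous_fst.tendsto q).comp hqψ
  have hq2 : Tendsto (fun n => (qn (ψ n)).2) atTop (𝓝 q.2) :=
    (continuous_snd.tendsto q).comp hqψ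
  refine ⟨g0, ?_, ?_, ?_⟩
  · exact hG.isSeqClosed (fun n => hg1 (ψ n)) (hq1.prodMk_nhds hψt)
  · exact hC.isSeqClosed (fun n => hg2 (ψ n)) hψt
  · exact le_of_tendsto_of_tendsto' ((continuous_norm.tendsto g0).comp hψt)
      hq2 (fun n => hg3 (ψ n))

lemma convex_Pset {f : EuclideanSpace ℝ (Fin d) → ℝ} {U : Set (EuclideanSpace ℝ (Fin d))}
    {v : EuclideanSpace ℝ (Fin d)} :
    Convex ℝ {g : EuclideanSpace ℝ (Fin d) | ∀ w ∈ U, f v + (inner ℝ g (w - v) : ℝ) ≤ f w} := by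
  intro g1 h1 g2 h2 a b ha hb hab w hw
  have e : (inner ℝ (a • g1 + b • g2) (w - v) : ℝ)
      = a * (inner ℝ g1 (w - v) : ℝ) + b * (inner ℝ g2 (w - v) : ℝ) := by
    rw [inner_add_left, real_inner_smul_left, real_inner_smul_left]
  simp only [mem_setOf_eq] at h1 h2 ⊢
  rw [e]
  have hb' : b = 1 - a := by linarith
  subst hb'
  nlinarith [mul_le_mul_of_nonneg_left (h1 w hw) ha, mul_le_mul_of_nonneg_left (h2 w hw) hb]

lemma isClosed_Pset {f : EuclideanSpace ℝ (Fin d) → ℝ} {U : Set (EuclideanSpace ℝ (Fin d))}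
    {v : EuclideanSpace ℝ (Fin d)} :
    IsClosed {g : EuclideanSpace ℝ (Fin d) | ∀ w ∈ U, f v + (inner ℝ g (w - v) : ℝ) ≤ f w} := by
  have : {g : EuclideanSpace ℝ (Fin d) | ∀ w ∈ U, f v + (inner ℝ g (w - v) : ℝ) ≤ f w}
      = ⋂ w ∈ U, {g : EuclideanSpace ℝ (Fin d) | f v + (inner ℝ g (w - v) : ℝ) ≤ f w} := by
    ext g; simp [mem_iInter]
  rw [this]
  refine isClosed_biInter fun w hw => ?_
  exact isClosed_le (continuous_const.add (continuous_id.inner continuous_const)) continuous_const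

lemma measurable_min_norm_selection {D : Set (EuclideanSpace ℝ (Fin d))} (hD : IsCompact D)
    (K : EuclideanSpace ℝ (Fin d) → Set (EuclideanSpace ℝ (Fin d)))
    (hKne : ∀ v ∈ D, (K v).Nonempty)
    (hKcl : ∀ v, IsClosed (K v)) (hKcvx : ∀ v, Convex ℝ (K v))
    {R : ℝ} (hKb : ∀ v ∈ D, K v ⊆ Metric.closedBall 0 R)
    (hG : IsClosed {p : EuclideanSpace ℝ (Fin d) × EuclideanSpace ℝ (Fin d) |
      p.1 ∈ D ∧ p.2 ∈ K p.1}) :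
    ∃ m : EuclideanSpace ℝ (Fin d) → EuclideanSpace ℝ (Fin d), Measurable m ∧
      (∀ v ∈ D, m v ∈ K v) ∧ (∀ v, v ∉ D → m v = 0) := by
  classical
  have minspec : ∀ v, v ∈ D → ∃ g ∈ K v, (∀ g' ∈ K v, ‖g‖ ≤ ‖g'‖) ∧
      (∀ g'' ∈ K v, (∀ g' ∈ K v, ‖g''‖ ≤ ‖g'‖) → g'' = g) :=
    fun v hv => exists_min_norm (hKne v hv) (hKcl v) (hKcvx v)
  set m : EuclideanSpace ℝ (Fin d) → EuclideanSpace ℝ (Fin d) :=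
    fun v => if h : v ∈ D then (minspec v h).choose else 0 with hm
  have hmem : ∀ v (hv : v ∈ D), m v ∈ K v := by
    intro v hv; rw [hm]; simp only [dif_pos hv]
    exact (minspec v hv).choose_spec.1
  have hminp : ∀ v (hv : v ∈ D), ∀ g' ∈ K v, ‖m v‖ ≤ ‖g'‖ := by
    intro v hv; rw [hm]; simp only [dif_pos hv]
    exact (minspec v hv).choose_spec.2.1
  have huniq : ∀ v (hv : v ∈ D), ∀ g'' ∈ K v, (∀ g' ∈ K v, ‖g''‖ ≤ ‖g'‖) → g'' = m v := by
    intro v hv; rw [hm]; simp only [dif_pos hv]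
    exact (minspec v hv).choose_spec.2.2
  have hout : ∀ v, v ∉ D → m v = 0 := by
    intro v hv; rw [hm]; simp only [dif_neg hv]
  set N : EuclideanSpace ℝ (Fin d) → ℝ := fun v => ‖m v‖ with hN
  set G : Set (EuclideanSpace ℝ (Fin d) × EuclideanSpace ℝ (Fin d)) :=
    {p | p.1 ∈ D ∧ p.2 ∈ K p.1} with hGdef
  have hGsub : G ⊆ D ×ˢ Metric.closedBall 0 R := by
    rintro ⟨p1, p2⟩ ⟨h1, h2⟩
    exact ⟨h1, hKb p1 h1 h2⟩
  have hG2 : ∀ C : Set (EuclideanSpace ℝ (Fin d)), IsClosed C →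
      IsClosed {q : EuclideanSpace ℝ (Fin d) × ℝ | ∃ g, (q.1, g) ∈ G ∧ g ∈ C ∧ ‖g‖ ≤ q.2} :=
    fun C hC => isClosed_G2 (isCompact_closedBall 0 R) hG hGsub hC
  -- measurability of N
  have hNmeas : Measurable N := by
    apply measurable_of_Iic
    intro r
    have hA : IsClosed ((fun v => (v, r)) ⁻¹'
        {q : EuclideanSpace ℝ (Fin d) × ℝ | ∃ g, (q.1, g) ∈ G ∧ g ∈ univ ∧ ‖g‖ ≤ q.2}) :=
      (hG2 univ isClosed_univ).preimage (continuous_id.prodMk continuous_const)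
    have heq : N ⁻¹' Iic r = ((fun v => (v, r)) ⁻¹'
        {q : EuclideanSpace ℝ (Fin d) × ℝ | ∃ g, (q.1, g) ∈ G ∧ g ∈ univ ∧ ‖g‖ ≤ q.2})
        ∪ (if (0:ℝ) ≤ r then Dᶜ else ∅) := by
      ext v
      simp only [mem_preimage, mem_Iic, mem_setOf_eq, mem_union, mem_univ, true_and, hN]
      constructor
      · intro hle
        by_cases hv : v ∈ D
        · exact Or.inl ⟨m v, ⟨hv, hmem v hv⟩, hle⟩
        · right
          rw [hout v hv] at hle
          simp only [norm_zero] at hle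
          simp [if_pos hle, hv]
      · rintro (⟨g, ⟨hvD, hgK⟩, hgr⟩ | hv)
        · exact le_trans (hminp v hvD g hgK) hgr
        · by_cases h0 : (0:ℝ) ≤ r
          · rw [if_pos h0] at hv
            rw [hout v hv]
            simpa using h0
          · rw [if_neg h0] at hv
            exact absurd hv (notMem_empty v)
    rw [heq]
    refine (hA.measurableSet).union ?_
    by_cases h0 : (0:ℝ) ≤ r
    · rw [if_pos h0]; exact hD.isClosed.measurableSet.compl
    · rw [if_neg h0]; exact MeasurableSet.empty
  -- measurability of m
  have hMmeas : Measurable m := by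
    apply measurable_of_isClosed
    intro C hC
    have hpre : MeasurableSet ((fun v => (v, N v)) ⁻¹'
        {q : EuclideanSpace ℝ (Fin d) × ℝ | ∃ g, (q.1, g) ∈ G ∧ g ∈ C ∧ ‖g‖ ≤ q.2}) :=
      (hG2 C hC).measurableSet.preimage (measurable_id.prodMk hNmeas)
    have heq : m ⁻¹' C = (D ∩ (fun v => (v, N v)) ⁻¹'
        {q : EuclideanSpace ℝ (Fin d) × ℝ | ∃ g, (q.1, g) ∈ G ∧ g ∈ C ∧ ‖g‖ ≤ q.2})
        ∪ (if (0 : EuclideanSpace ℝ (Fin d)) ∈ C then Dᶜ else ∅) := by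
      ext v
      simp only [mem_preimage, mem_inter_iff, mem_setOf_eq, mem_union]
      constructor
      · intro hvC
        by_cases hv : v ∈ D
        · exact Or.inl ⟨hv, m v, ⟨hv, hmem v hv⟩, hvC, le_refl _⟩
        · right
          rw [hout v hv] at hvC
          simp [if_pos hvC, hv]
      · rintro (⟨hvD, g, ⟨-, hgK⟩, hgC, hgle⟩ | hv)
        · have hgmin : ∀ g' ∈ K v, ‖g‖ ≤ ‖g'‖ :=
            fun g' hg' => le_trans hgle (hminp v hvD g' hg')
          have := huniq v hvD g hgK hgmin
          rwa [← this]
        · by_cases h0 : (0 : EuclideanSpace ℝ (Fin d)) ∈ C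
          · rw [if_pos h0] at hv
            rw [hout v hv]; exact h0
          · rw [if_neg h0] at hv
            exact absurd hv (notMem_empty v)
    rw [heq]
    refine (hD.isClosed.measurableSet.inter hpre).union ?_
    by_cases h0 : (0 : EuclideanSpace ℝ (Fin d)) ∈ C
    · rw [if_pos h0]; exact hD.isClosed.measurableSet.compl
    · rw [if_neg h0]; exact MeasurableSet.empty
  exact ⟨m, hMmeas, hmem, hout⟩

variable (φ : EuclideanSpace ℝ (Fin d) → EReal) (hbot : ∀ v, φ v ≠ ⊥)
  (hconv : ∀ u v : EuclideanSpace ℝ (Fin d), ∀ t : ℝ, 0 ≤ t → t ≤ 1 →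
      φ (t • u + (1 - t) • v) ≤ (t : EReal) * φ u + ((1 - t : ℝ) : EReal) * φ v)

include hbot hconv in
lemma convex_dom : Convex ℝ {v | φ v ≠ ⊤} := by
  intro u hu v hv a b ha hb hab
  have hb' : b = 1 - a := by linarith
  subst hb'
  have h := hconv u v a ha (by linarith)
  simp only [mem_setOf_eq] at hu hv ⊢
  rw [phi_eq_coe φ hbot hu, phi_eq_coe φ hbot hv] at h
  intro htop
  rw [htop] at h
  rw [← EReal.coe_mul, ← EReal.coe_mul, ← EReal.coe_add] at h
  exact EReal.coe_ne_top _ (top_le_iff.mp h)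

include hbot hconv in
lemma convexOn_phiR : ConvexOn ℝ {v | φ v ≠ ⊤} (fun v => (φ v).toReal) := by
  refine ⟨convex_dom φ hbot hconv, ?_⟩
  intro u hu v hv a b ha hb hab
  have hb' : b = 1 - a := by linarith
  subst hb'
  have h := hconv u v a ha (by linarith)
  simp only [mem_setOf_eq] at hu hv
  rw [phi_eq_coe φ hbot hu, phi_eq_coe φ hbot hv, ← EReal.coe_mul, ← EReal.coe_mul,
    ← EReal.coe_add] at h
  have hz : φ (a • u + (1 - a) • v) ≠ ⊤ :=
    convex_dom φ hbot hconv hu hv ha hb hab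
  rw [phi_eq_coe φ hbot hz, EReal.coe_le_coe_iff] at h
  simpa using h

include hbot hconv in
lemma mem_subdiff_iff {v g : EuclideanSpace ℝ (Fin d)}
    (hv : v ∈ interior {v | φ v ≠ ⊤}) :
    g ∈ subdiff φ v ↔ ∀ w ∈ interior {u : EuclideanSpace ℝ (Fin d) | φ u ≠ ⊤},
      (φ v).toReal + (inner ℝ g (w - v) : ℝ) ≤ (φ w).toReal := by
  have hvC : φ v ≠ ⊤ := interior_subset hv
  constructor
  · intro h w hw
    have hwC : φ w ≠ ⊤ := interior_subset hw
    have := h w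
    rw [phi_eq_coe φ hbot hvC, phi_eq_coe φ hbot hwC, ← EReal.coe_add,
      EReal.coe_le_coe_iff] at this
    exact this
  · intro h w
    by_cases hwC : φ w = ⊤
    · rw [hwC]; exact le_top
    · -- midpoint argument
      have hz : (2⁻¹ : ℝ) • v + (2⁻¹ : ℝ) • w ∈ interior {u : EuclideanSpace ℝ (Fin d) | φ u ≠ ⊤} :=
        (convex_dom φ hbot hconv).combo_interior_self_mem_interior hv hwC
          (by norm_num) (by norm_num) (by norm_num)
      set z := (2⁻¹ : ℝ) • v + (2⁻¹ : ℝ) • w with hzdef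
      have h1 : (φ v).toReal + (inner ℝ g (z - v) : ℝ) ≤ (φ z).toReal := h z hz
      have h2 : (φ z).toReal ≤ 2⁻¹ * (φ v).toReal + 2⁻¹ * (φ w).toReal := by
        have := (convexOn_phiR φ hbot hconv).2 (mem_setOf_eq ▸ hvC : v ∈ {u | φ u ≠ ⊤}) hwC
          (by norm_num : (0:ℝ) ≤ 2⁻¹) (by norm_num : (0:ℝ) ≤ 2⁻¹) (by norm_num)
        simpa using this
      have h3 : (inner ℝ g (z - v) : ℝ) = 2⁻¹ * (inner ℝ g (w - v) : ℝ) := by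
        have : z - v = (2⁻¹ : ℝ) • (w - v) := by
          rw [hzdef]; module
        rw [this, real_inner_smul_right]
      have : (φ v).toReal + (inner ℝ g (w - v) : ℝ) ≤ (φ w).toReal := by
        rw [h3] at h1; linarith
      rw [phi_eq_coe φ hbot hvC, phi_eq_coe φ hbot hwC, ← EReal.coe_add,
        EReal.coe_le_coe_iff]
      exact this

include hbot hconv in
lemma exists_subgrad {v : EuclideanSpace ℝ (Fin d)}
    (hv : v ∈ interior {u : EuclideanSpace ℝ (Fin d) | φ u ≠ ⊤}) :
    ∃ g : EuclideanSpace ℝ (Fin d), ∀ w ∈ interior {u : EuclideanSpace ℝ (Fin d) | φ u ≠ ⊤},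
      (φ v).toReal + (inner ℝ g (w - v) : ℝ) ≤ (φ w).toReal := by
  set U := interior {u : EuclideanSpace ℝ (Fin d) | φ u ≠ ⊤} with hU
  set f : EuclideanSpace ℝ (Fin d) → ℝ := fun v => (φ v).toReal with hf
  have hUopen : IsOpen U := isOpen_interior
  have hcvxU : ConvexOn ℝ U f :=
    (convexOn_phiR φ hbot hconv).subset interior_subset (convex_dom φ hbot hconv).interior
  have hcont : ContinuousOn f U := hcvxU.continuousOn hUopen
  set A : Set (EuclideanSpace ℝ (Fin d) × ℝ) := {p | p.1 ∈ U ∧ f p.1 < p.2} with hA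
  have hAconv : Convex ℝ A := hcvxU.convex_strict_epigraph
  have hAopen : IsOpen A := by
    have : A = ⋃ q : ℚ, ((U ∩ f ⁻¹' Iio (q : ℝ)) ×ˢ Ioi (q : ℝ)) := by
      ext p
      simp only [hA, mem_setOf_eq, mem_iUnion, mem_prod, mem_inter_iff, mem_preimage,
        mem_Iio, mem_Ioi]
      constructor
      · rintro ⟨h1, h2⟩
        obtain ⟨q, hq1, hq2⟩ := exists_rat_btwn h2
        exact ⟨q, ⟨h1, hq1⟩, hq2⟩
      · rintro ⟨q, ⟨h1, hq1⟩, hq2⟩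
        exact ⟨h1, hq1.trans hq2⟩
    rw [this]
    exact isOpen_iUnion fun q =>
      (hcont.isOpen_inter_preimage hUopen isOpen_Iio).prod isOpen_Ioi
  have hp0 : (v, f v) ∉ A := fun h => lt_irrefl _ h.2
  obtain ⟨L, hL⟩ := geometric_hahn_banach_open_point hAconv hAopen hp0
  set a : ℝ := L (0, 1) with ha_def
  have hdec : ∀ (w : EuclideanSpace ℝ (Fin d)) (t : ℝ), L (w, t) = L (w, 0) + t * a := by
    intro w t
    have : (w, t) = (w, (0:ℝ)) + t • ((0 : EuclideanSpace ℝ (Fin d)), (1:ℝ)) := by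
      simp [Prod.ext_iff]
    rw [this, map_add, L.map_smul]
    simp [smul_eq_mul, ha_def]
  have ha : a < 0 := by
    have h1 := hL (v, f v + 1) ⟨hv, by simp⟩
    rw [hdec v (f v + 1), hdec v (f v)] at h1
    nlinarith
  have key : ∀ w ∈ U, L (w, 0) + f w * a ≤ L (v, 0) + f v * a := by
    intro w hw
    refine le_of_forall_pos_le_add ?_
    intro ε hε
    have hdp : 0 < ε / -a := div_pos hε (by linarith)
    have h1 := hL (w, f w + ε / -a) ⟨hw, by linarith⟩
    rw [hdec w _, hdec v _] at h1
    have hne : a ≠ 0 := ne_of_lt ha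
    have h2 : ε / -a * a = -ε := by rw [div_mul_eq_mul_div, div_neg, mul_div_assoc, div_self hne, mul_one]
    nlinarith
  set y := (InnerProductSpace.toDual ℝ (EuclideanSpace ℝ (Fin d))).symm
    (L.comp (ContinuousLinearMap.inl ℝ (EuclideanSpace ℝ (Fin d)) ℝ)) with hy
  refine ⟨(-a)⁻¹ • y, ?_⟩
  intro w hw
  have hyw : ∀ u : EuclideanSpace ℝ (Fin d), (inner ℝ y u : ℝ) = L (u, 0) := by
    intro u
    rw [hy, InnerProductSpace.toDual_symm_apply]
    rfl
  have hin : (inner ℝ ((-a)⁻¹ • y) (w - v) : ℝ) = (-a)⁻¹ * (L (w,0) - L (v,0)) := by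
    rw [real_inner_smul_left, inner_sub_right, hyw, hyw]
  have hk := key w hw
  rw [hin]
  have hpos : 0 < -a := by linarith
  have h2 : (-a)⁻¹ * (L (w,0) - L (v,0)) ≤ f w - f v := by
    rw [inv_mul_le_iff₀ hpos]
    nlinarith
  have hfv : (φ v).toReal = f v := rfl
  have hfw : (φ w).toReal = f w := rfl
  rw [hfv, hfw]
  linarith

end Aux

/-- **Existence of bounded measurable subgradient selections.** If `x ∈ L¹_E(S,μ)` takes its
values a.e. in a bounded closed subset `D` of the interior of the domain of the proper lsc
convex function `φ`, then there is an essentially bounded measurable selection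
`x*(s) ∈ ∂φ(x(s))` a.e.; in particular `∂I_φ(x) ≠ ∅`. -/
theorem stmt_9 {S : Type*} [MeasurableSpace S] (μ : Measure S)
    [IsFiniteMeasure μ] [μ.IsComplete] (hμ : μ ≠ 0) (d : ℕ) (hd : 1 ≤ d)
    (φ : EuclideanSpace ℝ (Fin d) → EReal)
    (hproper : (∀ v, φ v ≠ ⊥) ∧ (∃ v, φ v ≠ ⊤))
    (hlsc : LowerSemicontinuous φ)
    (hconv : ∀ u v : EuclideanSpace ℝ (Fin d), ∀ t : ℝ, 0 ≤ t → t ≤ 1 →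
      φ (t • u + (1 - t) • v) ≤ (t : EReal) * φ u + ((1 - t : ℝ) : EReal) * φ v)
    (x : S → EuclideanSpace ℝ (Fin d)) (hx : Integrable x μ)
    (D : Set (EuclideanSpace ℝ (Fin d))) (hDb : IsBounded D) (hDc : IsClosed D)
    (hDsub : D ⊆ interior {v : EuclideanSpace ℝ (Fin d) | φ v ≠ ⊤})
    (hxD : ∀ᵐ s ∂μ, x s ∈ D) :
    ∃ xs : S → EuclideanSpace ℝ (Fin d), MemLp xs ⊤ μ ∧
      (∀ᵐ s ∂μ, xs s ∈ subdiff φ (x s)) ∧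
      (∀ y : S → EuclideanSpace ℝ (Fin d), Integrable y μ →
        Iphi μ φ x + ((∫ s, (inner ℝ (xs s) (y s - x s) : ℝ) ∂μ : ℝ) : EReal) ≤ Iphi μ φ y) := by
  obtain ⟨hbot, -⟩ := hproper
  set U := interior {v : EuclideanSpace ℝ (Fin d) | φ v ≠ ⊤} with hU
  set f : EuclideanSpace ℝ (Fin d) → ℝ := fun v => (φ v).toReal with hf
  have hUopen : IsOpen U := isOpen_interior
  have hUsub : U ⊆ {v | φ v ≠ ⊤} := interior_subset
  have hcvxU : ConvexOn ℝ U f :=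
    (convexOn_phiR φ hbot hconv).subset interior_subset (convex_dom φ hbot hconv).interior
  have hcont : ContinuousOn f U := hcvxU.continuousOn hUopen
  have hDcomp : IsCompact D := Metric.isCompact_of_isClosed_isBounded hDc hDb
  -- thickening
  obtain ⟨r, hrpos, hKsub⟩ := hDcomp.exists_cthickening_subset_open hUopen hDsub
  set Kt := Metric.cthickening r D with hKt
  have hKtcomp : IsCompact Kt := hDcomp.cthickening
  obtain ⟨M, hM⟩ := hKtcomp.exists_bound_of_continuousOn (hcont.mono hKsub)
  set R := 2 * M / r with hR
  -- multifunction
  set KK : EuclideanSpace ℝ (Fin d) → Set (EuclideanSpace ℝ (Fin d)) :=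
    fun v => Metric.closedBall 0 R ∩
      {g | ∀ w ∈ U, f v + (inner ℝ g (w - v) : ℝ) ≤ f w} with hKK
  have hKne : ∀ v ∈ D, (KK v).Nonempty := by
    intro v hv
    obtain ⟨g, hg⟩ := exists_subgrad φ hbot hconv (hDsub hv)
    have hvK : v ∈ Kt := Metric.self_subset_cthickening D hv
    have hgR : ‖g‖ ≤ R := by
      rcases eq_or_ne g 0 with rfl | hg0
      · have : |f v| ≤ M := by simpa using hM v hvK
        rw [hR]; simp only [norm_zero]
        have hM0 : (0:ℝ) ≤ M := (abs_nonneg _).trans this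
        positivity
      · set w := v + r • (‖g‖⁻¹ • g) with hw
        have hwK : w ∈ Kt := by
          refine Metric.mem_cthickening_of_dist_le w v r D hv ?_
          rw [hw, dist_self_add_left, norm_smul, norm_smul]
          simp [abs_of_pos hrpos, norm_inv, inv_mul_cancel₀ (norm_ne_zero_iff.2 hg0)]
        have hineq := hg w (hKsub hwK)
        have hwv : w - v = r • (‖g‖⁻¹ • g) := by rw [hw]; abel
        have hinner : (inner ℝ g (w - v) : ℝ) = r * ‖g‖ := by
          have hgn : ‖g‖ ≠ 0 := norm_ne_zero_iff.2 hg0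
          rw [hwv, real_inner_smul_right, real_inner_smul_right,
            real_inner_self_eq_norm_sq, sq]
          field_simp
        have h1 : |f w| ≤ M := by simpa using hM w hwK
        have h2 : |f v| ≤ M := by simpa using hM v hvK
        rw [hinner] at hineq
        rw [hR]
        rw [le_div_iff₀ hrpos]
        have := abs_le.1 h1
        have := abs_le.1 h2
        nlinarith
    exact ⟨g, Metric.mem_closedBall.2 (by simpa using hgR), hg⟩
  have hKcl : ∀ v, IsClosed (KK v) := fun v => Metric.isClosed_closedBall.inter isClosed_Pset
  have hKcvx : ∀ v, Convex ℝ (KK v) := fun v => (convex_closedBall _ _).inter convex_Pset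
  have hKb : ∀ v ∈ D, KK v ⊆ Metric.closedBall 0 R := fun v _ => inter_subset_left
  have hGcl : IsClosed {p : EuclideanSpace ℝ (Fin d) × EuclideanSpace ℝ (Fin d) |
      p.1 ∈ D ∧ p.2 ∈ KK p.1} := by
    have heq : {p : EuclideanSpace ℝ (Fin d) × EuclideanSpace ℝ (Fin d) |
        p.1 ∈ D ∧ p.2 ∈ KK p.1} =
        {p : EuclideanSpace ℝ (Fin d) × EuclideanSpace ℝ (Fin d) |
          p.1 ∈ D ∧ ∀ w ∈ U, f p.1 + (inner ℝ p.2 (w - p.1) : ℝ) ≤ f w} ∩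
        (univ ×ˢ Metric.closedBall 0 R) := by
      ext ⟨p1, p2⟩
      simp only [hKK, mem_setOf_eq, mem_inter_iff, mem_prod, mem_univ, true_and]
      tauto
    rw [heq]
    exact (isClosed_graphP hUopen hcont hDc hDsub).inter
      (isClosed_univ.prod Metric.isClosed_closedBall)
  obtain ⟨m, hm_meas, hm_mem, hm_out⟩ :=
    measurable_min_norm_selection hDcomp KK hKne hKcl hKcvx hKb hGcl
  set xs : S → EuclideanSpace ℝ (Fin d) := fun s => m (x s) with hxs
  have hx_aem : AEMeasurable x μ := hx.aemeasurable
  have hxs_aesm : AEStronglyMeasurable xs μ :=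
    (hm_meas.comp_aemeasurable hx_aem).aestronglyMeasurable
  have hxs_bound : ∀ᵐ s ∂μ, ‖xs s‖ ≤ R := by
    filter_upwards [hxD] with s hs
    have := hKb _ hs (hm_mem _ hs)
    simpa [hxs] using Metric.mem_closedBall.1 this
  have hxs_mem : ∀ᵐ s ∂μ, xs s ∈ subdiff φ (x s) := by
    filter_upwards [hxD] with s hs
    exact (mem_subdiff_iff φ hbot hconv (hDsub hs)).2 (hm_mem _ hs).2
  refine ⟨xs, memLp_top_of_bound hxs_aesm R hxs_bound, hxs_mem, ?_⟩
  -- integral inequality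
  have hφmeas : Measurable φ := hlsc.measurable
  have hfx_aesm : AEStronglyMeasurable (fun s => f (x s)) μ :=
    ((measurable_ereal_toReal.comp hφmeas).comp_aemeasurable hx_aem).aestronglyMeasurable
  have hfx_bound : ∀ᵐ s ∂μ, ‖f (x s)‖ ≤ M := by
    filter_upwards [hxD] with s hs
    exact hM _ (Metric.self_subset_cthickening D hs)
  have hfx_int : Integrable (fun s => f (x s)) μ :=
    Integrable.mono' (integrable_const M) hfx_aesm hfx_bound
  have hfx_ne_top : ∀ᵐ s ∂μ, φ (x s) ≠ ⊤ := by
    filter_upwards [hxD] with s hs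
    exact hUsub (hDsub hs)
  have hIx : Iphi μ φ x = ((∫ s, f (x s) ∂μ : ℝ) : EReal) := by
    rw [Iphi, if_pos ⟨hfx_int, hfx_ne_top⟩]
  intro y hy
  by_cases hycond : (Integrable (fun s => (φ (y s)).toReal) μ ∧ ∀ᵐ s ∂μ, φ (y s) ≠ ⊤)
  swap
  · have hIy : Iphi μ φ y = ⊤ := by rw [Iphi, if_neg hycond]
    rw [hIy, hIx, ← EReal.coe_add]
    exact le_top
  have hIy : Iphi μ φ y = ((∫ s, f (y s) ∂μ : ℝ) : EReal) := by
    rw [Iphi, if_pos hycond]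
  rw [hIx, hIy, ← EReal.coe_add, EReal.coe_le_coe_iff]
  have hinner_int : Integrable (fun s => (inner ℝ (xs s) (y s - x s) : ℝ)) μ := by
    refine Integrable.mono' (((hy.sub hx).norm.const_mul R)) ?_ ?_
    · exact AEStronglyMeasurable.inner hxs_aesm (hy.sub hx).aestronglyMeasurable
    · filter_upwards [hxs_bound] with s hs
      calc ‖(inner ℝ (xs s) (y s - x s) : ℝ)‖ ≤ ‖xs s‖ * ‖y s - x s‖ := norm_inner_le_norm _ _
        _ ≤ R * ‖y s - x s‖ := mul_le_mul_of_nonneg_right hs (norm_nonneg _)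
  rw [← integral_add hfx_int hinner_int]
  refine integral_mono_ae (hfx_int.add hinner_int) hycond.1 ?_
  filter_upwards [hxD, hxs_mem, hycond.2] with s hsD hsub hytop
  have h := hsub (y s)
  have hxtop : φ (x s) ≠ ⊤ := hUsub (hDsub hsD)
  rw [phi_eq_coe φ hbot hxtop, phi_eq_coe φ hbot hytop, ← EReal.coe_add,
    EReal.coe_le_coe_iff] at h
  exact h
end
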